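/- arXiv:2303.03671 — 6 statements merged into one kernel-verified Lean document; each statement's English description precedes it below -/
import Mathlib

section
/- Let d ≥ 3, and let σ, γ ∈ S_d satisfy γ² = id and γ∘σ∘γ = σ⁻¹. Suppose τ ∈ S_d is a 3-cycle satisfying γ∘(τ∘σ)∘γ = (τ∘σ)⁻¹. Then there exists a unique ordered pair (t₁, t₂) of transpositions in S_d with τ = t₂ ∘ t₁ such that γ∘(t₁∘σ)∘γ = (t₁∘σ)⁻¹. -/
open Equiv Equiv.Perm

section Aux

variable {d : ℕ}

/-- A swap sending `y` to `x` (with `x ≠ y`) is `swap x y`. -/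
lemma swap_eq_of_apply_eq {s : Perm (Fin d)} (hs : s.IsSwap) {x y : Fin d}
    (hxy : x ≠ y) (h : s y = x) : s = Equiv.swap x y := by
  obtain ⟨u, v, huv, rfl⟩ := hs
  rcases eq_or_ne y u with rfl | hyu
  · rw [Equiv.swap_apply_left] at h
    subst h; exact Equiv.swap_comm _ _
  · rcases eq_or_ne y v with rfl | hyv
    · rw [Equiv.swap_apply_right] at h
      subst h; rfl
    · rw [Equiv.swap_apply_of_ne_of_ne hyu hyv] at h
      exact absurd h.symm hxy

end Aux

/-- If `γ² = id`, `γσγ = σ⁻¹` and `τ` is a 3-cycle with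
`γ(τσ)γ = (τσ)⁻¹`, then there is a unique ordered pair of transpositions `(t₁, t₂)`
with `τ = t₂ ∘ t₁` and `γ(t₁σ)γ = (t₁σ)⁻¹`. -/
theorem unique_real_decomposition_of_three_cycle
    (d : ℕ) (hd : 3 ≤ d) (σ γ τ : Perm (Fin d))
    (hγ : γ * γ = 1) (hσ : γ * σ * γ = σ⁻¹)
    (hτ : τ.IsThreeCycle) (hreal : γ * (τ * σ) * γ = (τ * σ)⁻¹) :
    ∃! p : Perm (Fin d) × Perm (Fin d),
      p.1.IsSwap ∧ p.2.IsSwap ∧ τ = p.2 * p.1 ∧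
        γ * (p.1 * σ) * γ = (p.1 * σ)⁻¹ := by
  set θ : Perm (Fin d) := σ * γ with hθdef
  have hθ2 : θ * θ = 1 := by
    have h : σ * (γ * σ * γ) = σ * σ⁻¹ := by rw [hσ]
    simpa [hθdef, mul_assoc] using h
  have hθinv : θ⁻¹ = θ := inv_eq_of_mul_eq_one_right hθ2
  -- reformulate the "reality" condition in terms of θ
  have hcond : ∀ t : Perm (Fin d),
      (γ * (t * σ) * γ = (t * σ)⁻¹) ↔ θ * t * θ = t⁻¹ := by
    intro t
    have e1 : θ * t * θ = σ * (γ * (t * σ) * γ) := by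
      simp [hθdef, mul_assoc]
    have e2 : t⁻¹ = σ * (t * σ)⁻¹ := by
      simp [mul_inv_rev, ← mul_assoc]
    rw [e1, e2]
    exact ⟨fun h => by rw [h], fun h => mul_left_cancel h⟩
  have hθτ : θ * τ * θ = τ⁻¹ := (hcond τ).mp hreal
  -- commutation relation
  have hcommτ : ∀ x, θ (τ x) = τ⁻¹ (θ x) := by
    intro x
    have h : θ * τ = τ⁻¹ * θ := by
      have := congrArg (· * θ) hθτ
      simpa [mul_assoc, hθ2] using this
    calc θ (τ x) = (θ * τ) x := rfl
      _ = (τ⁻¹ * θ) x := by rw [h]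
      _ = τ⁻¹ (θ x) := rfl
  -- basic data of the 3-cycle
  have hcard : τ.support.card = 3 := hτ.card_support
  have hτ3 : τ ^ 3 = 1 := by
    have := hτ.orderOf
    rw [← this]; exact pow_orderOf_eq_one τ
  have hne1 : τ ≠ 1 := by
    intro h; rw [h] at hcard; simp at hcard
  obtain ⟨a, ha⟩ : ∃ a, a ∈ τ.support := by
    rcases Finset.card_pos.mp (by rw [hcard]; norm_num) with ⟨a, ha⟩
    exact ⟨a, ha⟩
  set b := τ a with hb
  set c := τ b with hc
  have hτc : τ c = a := by
    have h : (τ ^ 3) a = a := by rw [hτ3]; rfl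
    calc τ c = (τ ^ 3) a := by simp [pow_succ, Perm.mul_apply, hb, hc]
      _ = a := h
  have hab : a ≠ b := fun h => (mem_support.mp ha) h.symm
  have hbmem : b ∈ τ.support := apply_mem_support.mpr ha
  have hbc : b ≠ c := fun h => (mem_support.mp hbmem) h.symm
  have hac : a ≠ c := by
    intro h
    have h2 : τ a = a := by rw [h, hτc]; exact h
    exact hab (hb.trans h2).symm
  have hcmem : c ∈ τ.support := apply_mem_support.mpr hbmem
  have hsupp_eq : τ.support = {a, b, c} := by
    symm
    apply Finset.eq_of_subset_of_card_le
    · intro x hx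
      simp only [Finset.mem_insert, Finset.mem_singleton] at hx
      rcases hx with rfl | rfl | rfl <;> assumption
    · rw [hcard]
      rw [Finset.card_insert_of_notMem (by simp [hab, hac]),
        Finset.card_insert_of_notMem (by simp [hbc])]
      simp
  have hfix : ∀ x : Fin d, x ≠ a → x ≠ b → x ≠ c → τ x = x := by
    intro x h1 h2 h3
    by_contra h
    have hx : x ∈ τ.support := mem_support.mpr h
    rw [hsupp_eq] at hx
    simp only [Finset.mem_insert, Finset.mem_singleton] at hx
    tauto
  have hτinva : τ⁻¹ a = c := by rw [← hτc]; simp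
  have hτinvb : τ⁻¹ b = a := by rw [hb]; simp
  have hτinvc : τ⁻¹ c = b := by rw [hc]; simp
  -- θ a ∈ {a, b, c}
  have hθa_mem : θ a = a ∨ θ a = b ∨ θ a = c := by
    have h : θ a ∈ τ.support := by
      rw [mem_support]
      have h1 : θ a = τ⁻¹ (θ c) := by
        have := hcommτ c
        rw [hτc] at this
        exact this
      intro hcontra
      have h2 : τ (θ a) = θ c := by rw [h1]; simp
      rw [hcontra] at h2
      exact hac (θ.injective h2.symm).symm
    rw [hsupp_eq] at h
    simpa using h
  -- structure of θ on the support of a commuting swap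
  have hswap_cond : ∀ x y : Fin d, x ≠ y → θ * Equiv.swap x y * θ = Equiv.swap x y →
      (θ x = x ∧ θ y = y) ∨ (θ x = y ∧ θ y = x) := by
    intro x y hxy h
    have hcm : θ (Equiv.swap x y x) = Equiv.swap x y (θ x) := by
      have h' : θ * Equiv.swap x y = Equiv.swap x y * θ := by
        have := congrArg (· * θ) h
        simpa [mul_assoc, hθ2] using this
      calc θ (Equiv.swap x y x) = (θ * Equiv.swap x y) x := rfl
        _ = (Equiv.swap x y * θ) x := by rw [h']
        _ = Equiv.swap x y (θ x) := rfl
    rw [Equiv.swap_apply_left] at hcm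
    rcases eq_or_ne (θ x) x with h1 | h1
    · left
      refine ⟨h1, ?_⟩
      rw [hcm, h1, Equiv.swap_apply_left]
    · rcases eq_or_ne (θ x) y with h2 | h2
      · right
        refine ⟨h2, ?_⟩
        rw [hcm, h2, Equiv.swap_apply_right]
      · exfalso
        rw [Equiv.swap_apply_of_ne_of_ne h1 h2] at hcm
        exact hxy (θ.injective hcm).symm
  have hswap_cond' : ∀ x y : Fin d,
      ((θ x = x ∧ θ y = y) ∨ (θ x = y ∧ θ y = x)) →
      θ * Equiv.swap x y * θ = Equiv.swap x y := by
    intro x y h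
    have key : θ * Equiv.swap x y * θ = Equiv.swap (θ x) (θ y) := by
      have h0 := (swap_apply_apply θ x y).symm
      rw [hθinv] at h0
      exact h0
    rcases h with ⟨h1, h2⟩ | ⟨h1, h2⟩
    · rw [key, h1, h2]
    · rw [key, h1, h2, Equiv.swap_comm]
  have hcond_swap : ∀ x y : Fin d,
      ((γ * (Equiv.swap x y * σ) * γ = (Equiv.swap x y * σ)⁻¹) ↔
        θ * Equiv.swap x y * θ = Equiv.swap x y) := by
    intro x y
    rw [hcond, Equiv.swap_inv]
  -- master lemma: for a cyclic labelling (p,q,r) of the 3-cycle such that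
  -- θ fixes p and swaps q,r, conclude.
  have master : ∀ p q r : Fin d, τ p = q → τ q = r → τ r = p →
      p ≠ q → q ≠ r → p ≠ r →
      (∀ w : Fin d, w ≠ p → w ≠ q → w ≠ r → τ w = w) →
      θ p = p → θ q = r → θ r = q →
      ∃! pr : Perm (Fin d) × Perm (Fin d),
        pr.1.IsSwap ∧ pr.2.IsSwap ∧ τ = pr.2 * pr.1 ∧
          γ * (pr.1 * σ) * γ = (pr.1 * σ)⁻¹ := by
    intro p q r hτp hτq hτr hpq hqr hpr hfx hθp hθq hθr
    have hprod : τ * Equiv.swap q r = Equiv.swap p q := by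
      ext w
      rw [Perm.mul_apply]
      rcases eq_or_ne w p with rfl | hwp
      · rw [Equiv.swap_apply_of_ne_of_ne hpq hpr, hτp, Equiv.swap_apply_left]
      rcases eq_or_ne w q with rfl | hwq
      · rw [Equiv.swap_apply_left, hτr, Equiv.swap_apply_right]
      rcases eq_or_ne w r with rfl | hwr
      · rw [Equiv.swap_apply_right, hτq]
        rw [Equiv.swap_apply_of_ne_of_ne (fun h => hpr h.symm) hqr.symm]
      · rw [Equiv.swap_apply_of_ne_of_ne hwq hwr, hfx w hwp hwq hwr,
          Equiv.swap_apply_of_ne_of_ne hwp hwq]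
    have hτdec : τ = Equiv.swap p q * Equiv.swap q r := by
      rw [← hprod, mul_swap_mul_self]
    refine ⟨(Equiv.swap q r, Equiv.swap p q), ⟨⟨q, r, hqr, rfl⟩, ⟨p, q, hpq, rfl⟩,
      hτdec, (hcond_swap q r).mpr (hswap_cond' q r (Or.inr ⟨hθq, hθr⟩))⟩, ?_⟩
    rintro ⟨t1, t2⟩ ⟨hs1, hs2, hτeq, hcnd⟩
    obtain ⟨x, y, hxy, rfl⟩ := hs1
    have hθt : θ * Equiv.swap x y * θ = Equiv.swap x y := (hcond_swap x y).mp hcnd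
    have hstruct := hswap_cond x y hxy hθt
    -- x and y lie in {p, q, r}
    have hxmem : x = p ∨ x = q ∨ x = r := by
      by_contra hcon
      push_neg at hcon
      have hτx : τ x = x := hfx x hcon.1 hcon.2.1 hcon.2.2
      have ht2y : t2 y = x := by
        have : τ x = t2 (Equiv.swap x y x) := by rw [hτeq]; rfl
        rw [hτx, Equiv.swap_apply_left] at this
        exact this.symm
      have : t2 = Equiv.swap x y := swap_eq_of_apply_eq hs2 hxy ht2y
      rw [this, Equiv.swap_mul_self] at hτeq
      exact hne1 hτeq
    have hymem : y = p ∨ y = q ∨ y = r := by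
      by_contra hcon
      push_neg at hcon
      have hτy : τ y = y := hfx y hcon.1 hcon.2.1 hcon.2.2
      have ht2x : t2 x = y := by
        have : τ y = t2 (Equiv.swap x y y) := by rw [hτeq]; rfl
        rw [hτy, Equiv.swap_apply_right] at this
        exact this.symm
      have : t2 = Equiv.swap y x := swap_eq_of_apply_eq hs2 hxy.symm ht2x
      rw [this, Equiv.swap_comm, Equiv.swap_mul_self] at hτeq
      exact hne1 hτeq
    -- swap x y must equal swap q r
    have ht1eq : Equiv.swap x y = Equiv.swap q r := by
      have hθinj := θ.injective
      rcases hxmem with rfl | rfl | rfl <;> rcases hymem with rfl | rfl | rfl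
      · exact absurd rfl hxy
      · exfalso
        rcases hstruct with ⟨h1, h2⟩ | ⟨h1, h2⟩
        · rw [hθq] at h2; exact hqr h2.symm
        · rw [hθp] at h1; exact hpq h1
      · exfalso
        rcases hstruct with ⟨h1, h2⟩ | ⟨h1, h2⟩
        · rw [hθr] at h2; exact hqr h2
        · rw [hθp] at h1; exact hpr h1
      · exfalso
        rcases hstruct with ⟨h1, h2⟩ | ⟨h1, h2⟩
        · rw [hθq] at h1; exact hqr h1.symm
        · rw [hθp] at h2; exact hpq h2
      · exact absurd rfl hxy
      · rfl
      · exfalso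
        rcases hstruct with ⟨h1, h2⟩ | ⟨h1, h2⟩
        · rw [hθr] at h1; exact hqr h1
        · rw [hθp] at h2; exact hpr h2
      · exact Equiv.swap_comm _ _
      · exact absurd rfl hxy
    have ht2eq : t2 = Equiv.swap p q := by
      have : t2 = τ * Equiv.swap x y := by
        rw [hτeq, mul_swap_mul_self]
      rw [this, ht1eq, hprod]
    exact Prod.ext ht1eq ht2eq
  -- now the three cases for θ a
  have hθb_of : ∀ v : Fin d, θ a = v → θ b = τ⁻¹ v := by
    intro v hv
    have := hcommτ a
    rw [← hb, hv] at this
    exact this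
  have hθc_of : ∀ v : Fin d, θ b = v → θ c = τ⁻¹ v := by
    intro v hv
    have := hcommτ b
    rw [← hc, hv] at this
    exact this
  rcases hθa_mem with hθa | hθa | hθa
  · -- θ fixes a, swaps b and c
    have hθb : θ b = c := by rw [hθb_of a hθa, hτinva]
    have hθc : θ c = b := by rw [hθc_of c hθb, hτinvc]
    exact master a b c hb.symm hc.symm hτc hab hbc hac hfix hθa hθb hθc
  · -- θ fixes c, swaps a and b  : cyclic labelling (c, a, b)
    have hθb : θ b = a := by rw [hθb_of b hθa, hτinvb]
    have hθc : θ c = c := by rw [hθc_of a hθb, hτinva]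
    exact master c a b hτc hb.symm hc.symm hac.symm hab (fun h => hbc h.symm)
      (fun w h1 h2 h3 => hfix w h2 h3 h1) hθc hθa hθb
  · -- θ fixes b, swaps c and a : cyclic labelling (b, c, a)
    have hθb : θ b = b := by rw [hθb_of c hθa, hτinvc]
    have hθc : θ c = a := by rw [hθc_of b hθb, hτinvb]
    exact master b c a hc.symm hτc hb.symm hbc (fun h => hac h.symm) hab.symm
      (fun w h1 h2 h3 => hfix w h3 h1 h2) hθb hθc hθa
end

section
/- Let d ≥ 3, and let σ, γ ∈ S_d satisfy γ² = id and γ∘σ∘γ = σ⁻¹, and set γ₁ = γ∘σ (so that γ₁ is an involution with γ₁∘σ∘γ₁ = σ⁻¹). Suppose τ ∈ S_d is a 3-cycle satisfying γ₁∘(τ∘σ)∘γ₁ = (τ∘σ)⁻¹. Then there exists a unique ordered pair (t₁, t₂) of transpositions in S_d with τ = t₂ ∘ t₁ such that γ₁∘(t₁∘σ)∘γ₁ = (t₁∘σ)⁻¹. -/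
/-!
Since `γσγ = σ⁻¹` and `γ² = 1`, one has `σγσ = γ`, so the reality condition for `tσ`
with respect to `γ₁ = γσ` says `γtγ = t⁻¹`: the problem is about an involution `γ` inverting the
3-cycle `τ` by conjugation. Such a `γ` permutes the three points of the support of `τ`, so it
fixes one of them, `x`, and exchanges `τ x` and `τ² x`. In a decomposition `τ = t₂ t₁` into
transpositions, `t₁` moves two points of the support of `τ` (as `t₂ = τ t₁` is an involution),
and `γ` commutes with `t₁` only for `t₁ = (τ x, τ² x)`.
-/

open Equiv Equiv.Perm

theorem dihedral_mul_mul_eq_inv_iff {G : Type*} [Group G] {σ γ : G} (hγ : γ * γ = 1)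
    (hσ : γ * σ * γ = σ⁻¹) (t : G) :
    γ * σ * (t * σ) * (γ * σ) = (t * σ)⁻¹ ↔ γ * t * γ = t⁻¹ := by
  have hγinv : γ⁻¹ = γ := inv_eq_of_mul_eq_one_right hγ
  have hσγσ : σ * γ * σ = γ := by
    calc σ * γ * σ = σ * (γ * σ * γ) * γ⁻¹ := by group
      _ = γ := by rw [hσ, hγinv]; group
  have hlhs : γ * σ * (t * σ) * (γ * σ) = γ * σ * (t * γ) := by
    calc γ * σ * (t * σ) * (γ * σ) = γ * σ * t * (σ * γ * σ) := by group
      _ = γ * σ * (t * γ) := by rw [hσγσ]; group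
  have hrhs : (t * σ)⁻¹ = γ * σ * (γ * t⁻¹) := by
    calc (t * σ)⁻¹ = σ⁻¹ * t⁻¹ := by group
      _ = γ * σ * (γ * t⁻¹) := by rw [← hσ]; group
  rw [hlhs, hrhs, mul_right_inj, ← mul_right_inj γ, ← mul_assoc γ γ, hγ, one_mul, mul_assoc]

namespace Equiv.Perm

variable {α : Type*} [DecidableEq α] [Fintype α] {τ c : Perm α}

theorem IsThreeCycle.support_nonempty (hτ : τ.IsThreeCycle) : τ.support.Nonempty :=
  Finset.card_pos.mp (by rw [hτ.card_support]; norm_num)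

theorem IsThreeCycle.mem_support_of_isSwap_mul_swap (hτ : τ.IsThreeCycle) {a b : α}
    (h : (τ * swap a b).IsSwap) : a ∈ τ.support := by
  have hinv : ∀ w, τ (swap a b (τ (swap a b w))) = w := by
    obtain ⟨p, q, -, hpq⟩ := h
    have h1 : τ * swap a b * (τ * swap a b) = 1 := by rw [hpq, swap_mul_self]
    exact fun w => by simpa only [mul_apply, one_apply] using Perm.ext_iff.mp h1 w
  by_contra ha
  rw [notMem_support] at ha
  have hb : τ b = b := by
    have h2 : swap a b (τ b) = a := τ.injective <| by
      simpa only [swap_apply_left, ha] using hinv a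
    rwa [swap_apply_eq_iff, swap_apply_left] at h2
  obtain ⟨w, hw⟩ := hτ.support_nonempty
  have hτw := apply_mem_support.mpr hw
  have hne : ∀ u ∈ τ.support, u ≠ a ∧ u ≠ b := fun u hu =>
    ⟨fun h => mem_support.mp hu (h ▸ ha), fun h => mem_support.mp hu (h ▸ hb)⟩
  have h3 := hinv w
  rw [swap_apply_of_ne_of_ne (hne w hw).1 (hne w hw).2,
    swap_apply_of_ne_of_ne (hne _ hτw).1 (hne _ hτw).2] at h3
  simpa [h3] using hτ.nodup_iff_mem_support.mpr hw

theorem IsThreeCycle.exists_mem_support_apply_eq_self (hτ : τ.IsThreeCycle) (hc : c * c = 1)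
    (hcτ : c * τ * c = τ⁻¹) : ∃ x ∈ τ.support, c x = x := by
  have hS : τ.support.map c.toEmbedding = τ.support := by
    rw [← support_conj, inv_eq_of_mul_eq_one_right hc, hcτ, support_inv]
  have hmaps : ∀ x, c x ∈ τ.support ↔ x ∈ τ.support := fun x => by
    conv_lhs => rw [← hS]
    exact Finset.mem_map' _
  -- an involution of the three-element set `τ.support` has a fixed point
  obtain ⟨⟨x, hx⟩, hfix⟩ := exists_fixed_point_of_prime (p := 2) (n := 1)
    (σ := c.subtypePerm hmaps) (by rw [Fintype.card_coe, hτ.card_support]; norm_num)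
    (by ext; simp [pow_one, sq, hc])
  exact ⟨x, hx, congrArg Subtype.val hfix⟩

theorem IsThreeCycle.apply_apply_apply (hτ : τ.IsThreeCycle) (x : α) : τ (τ (τ x)) = x := by
  have h := pow_orderOf_eq_one τ
  rw [hτ.orderOf] at h
  simpa [pow_succ, mul_apply] using Perm.ext_iff.mp h x

theorem IsThreeCycle.apply_apply_of_conj_eq_inv (hτ : τ.IsThreeCycle)
    (hcτ : c * τ * c = τ⁻¹) {x : α} (hcx : c x = x) : c (τ x) = τ (τ x) := by
  calc c (τ x) = (c * τ * c) x := by rw [mul_apply, mul_apply, hcx]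
    _ = τ (τ x) := by rw [hcτ, Perm.inv_eq_iff_eq, hτ.apply_apply_apply]

theorem IsThreeCycle.eq_of_conj_eq_inv_of_apply_eq_self (hτ : τ.IsThreeCycle) (hc : c * c = 1)
    (hcτ : c * τ * c = τ⁻¹) {x w : α} (hx : x ∈ τ.support) (hcx : c x = x)
    (hw : w ∈ τ.support) (hcw : c w = w) : w = x := by
  have hcy := hτ.apply_apply_of_conj_eq_inv hcτ hcx
  have hyz : τ x ≠ τ (τ x) := fun h => mem_support.mp hx (τ.injective h).symm
  rw [hτ.support_eq_iff_mem_support.mpr hx] at hw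
  simp only [Finset.mem_insert, Finset.mem_singleton] at hw
  rcases hw with rfl | rfl | rfl
  · rfl
  · exact absurd (hcw.symm.trans hcy) hyz
  · have hcz : c (τ (τ x)) = τ x := by rw [← hcy, ← mul_apply, hc, one_apply]
    exact absurd (hcz.symm.trans hcw) hyz

theorem IsThreeCycle.swap_eq_of_swap_apply_apply_eq (hτ : τ.IsThreeCycle) (hc : c * c = 1)
    (hcτ : c * τ * c = τ⁻¹) {x a b : α} (hx : x ∈ τ.support) (hcx : c x = x)
    (ha : a ∈ τ.support) (hb : b ∈ τ.support) (hab : a ≠ b)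
    (hcab : swap (c a) (c b) = swap a b) : swap a b = swap (τ x) (τ (τ x)) := by
  have hax : a ≠ x := by
    rintro rfl
    rw [hcx] at hcab
    exact hab (hτ.eq_of_conj_eq_inv_of_apply_eq_self hc hcτ ha hcx hb
      (swap_injective_of_left a hcab)).symm
  have hbx : b ≠ x := by
    rintro rfl
    rw [hcx] at hcab
    exact hab (hτ.eq_of_conj_eq_inv_of_apply_eq_self hc hcτ hb hcx ha
      (swap_injective_of_right b hcab))
  rw [hτ.support_eq_iff_mem_support.mpr hx] at ha hb
  simp only [Finset.mem_insert, Finset.mem_singleton] at ha hb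
  rcases ha with ha | rfl | rfl <;> rcases hb with hb | rfl | rfl
  all_goals first | contradiction | rfl | exact swap_comm _ _

theorem IsThreeCycle.existsUnique_swap_mul_swap_of_conj_eq_inv (hτ : τ.IsThreeCycle)
    (hc : c * c = 1) (hcτ : c * τ * c = τ⁻¹) :
    ∃! p : Perm α × Perm α, p.1.IsSwap ∧ p.2.IsSwap ∧ τ = p.2 * p.1 ∧ c * p.1 * c = p.1⁻¹ := by
  have hcinv : c⁻¹ = c := inv_eq_of_mul_eq_one_right hc
  obtain ⟨x, hx, hcx⟩ := hτ.exists_mem_support_apply_eq_self hc hcτ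
  have hcy := hτ.apply_apply_of_conj_eq_inv hcτ hcx
  have hτ_eq := hτ.eq_swap_mul_swap_iff_mem_support.mpr hx
  have hxy : x ≠ τ x := (mem_support.mp hx).symm
  have hyz : τ x ≠ τ (τ x) := fun h => hxy (τ.injective h)
  set y := τ x
  set z := τ y
  have hcz : c z = y := by rw [← hcy, ← mul_apply, hc, one_apply]
  refine ⟨(swap y z, swap x y), ⟨⟨y, z, hyz, rfl⟩, ⟨x, y, hxy, rfl⟩, hτ_eq, ?_⟩, ?_⟩
  · calc c * swap y z * c = c * swap y z * c⁻¹ := by rw [hcinv]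
      _ = (swap y z)⁻¹ := by rw [← swap_apply_apply, hcy, hcz, swap_inv, swap_comm]
  rintro ⟨t₁, t₂⟩ ⟨⟨a, b, hab, rfl⟩, ht₂, hτ_ab, hct⟩
  dsimp only at ht₂ hτ_ab hct
  have ht₂_eq : t₂ = τ * swap a b := by rw [hτ_ab, mul_swap_mul_self]
  rw [ht₂_eq] at ht₂
  have ht₁ : swap a b = swap y z := hτ.swap_eq_of_swap_apply_apply_eq hc hcτ hx hcx
    (hτ.mem_support_of_isSwap_mul_swap ht₂)
    (hτ.mem_support_of_isSwap_mul_swap (swap_comm a b ▸ ht₂)) hab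
    (by rw [swap_apply_apply, hcinv, hct, swap_inv])
  rw [ht₂_eq, ht₁, hτ_eq, mul_swap_mul_self]

end Equiv.Perm

theorem unique_real_decomposition_of_three_cycle_shifted_general
    (d : ℕ) (σ γ τ : Perm (Fin d))
    (hγ : γ * γ = 1) (hσ : γ * σ * γ = σ⁻¹)
    (γ₁ : Perm (Fin d)) (hγ₁ : γ₁ = γ * σ)
    (hτ : τ.IsThreeCycle) (hreal : γ₁ * (τ * σ) * γ₁ = (τ * σ)⁻¹) :
    ∃! p : Perm (Fin d) × Perm (Fin d),
      p.1.IsSwap ∧ p.2.IsSwap ∧ τ = p.2 * p.1 ∧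
        γ₁ * (p.1 * σ) * γ₁ = (p.1 * σ)⁻¹ := by
  subst hγ₁
  simp only [dihedral_mul_mul_eq_inv_iff hγ hσ] at hreal ⊢
  exact hτ.existsUnique_swap_mul_swap_of_conj_eq_inv hγ hreal

/-- If `γ² = id`, `γσγ = σ⁻¹`, `γ₁ = γ∘σ`, and `τ` is a 3-cycle with
`γ₁(τσ)γ₁ = (τσ)⁻¹`, then there is a unique ordered pair of transpositions `(t₁, t₂)`
with `τ = t₂ ∘ t₁` and `γ₁(t₁σ)γ₁ = (t₁σ)⁻¹`. -/
theorem unique_real_decomposition_of_three_cycle_shifted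
    (d : ℕ) (hd : 3 ≤ d) (σ γ τ : Perm (Fin d))
    (hγ : γ * γ = 1) (hσ : γ * σ * γ = σ⁻¹)
    (γ₁ : Perm (Fin d)) (hγ₁ : γ₁ = γ * σ)
    (hτ : τ.IsThreeCycle) (hreal : γ₁ * (τ * σ) * γ₁ = (τ * σ)⁻¹) :
    ∃! p : Perm (Fin d) × Perm (Fin d),
      p.1.IsSwap ∧ p.2.IsSwap ∧ τ = p.2 * p.1 ∧
        γ₁ * (p.1 * σ) * γ₁ = (p.1 * σ)⁻¹ :=
  unique_real_decomposition_of_three_cycle_shifted_general d σ γ τ hγ hσ γ₁ hγ₁ hτ hreal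
end

section
/- Let d ≥ 1 and let σ, γ ∈ S_d satisfy γ² = id and γ∘σ∘γ = σ⁻¹. Let c₁, c₂ be two distinct cycle factors of σ forming a conjugated pair with respect to γ (i.e. γ∘c₁∘γ = c₂⁻¹), each with support of cardinality k ≥ 1, and let c₃ be a cycle factor of σ distinct from c₁ and c₂ with γ∘c₃∘γ = c₃⁻¹, whose support has even cardinality e and contains no fixed point of γ. Then the number of 3-cycles τ ∈ S_d such that the support of τ meets the support of each of c₁, c₂, c₃ in exactly one point and γ∘(τ∘σ)∘γ = (τ∘σ)⁻¹ equals 4k. -/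
/-!
Put `ρ = σγ`. Since `γσγ = σ⁻¹`, `ρ` is an involution and `γ(τσ)γ = (τσ)⁻¹` becomes
`ρτρ⁻¹ = τ⁻¹`, so `ρ` preserves the support of `τ`. As `ρ` maps the support of `c₁` into that of
`c₂` and the support of `c₃` to itself, the support of an admissible `τ` is `{a, ρ a, c}` with `a`
in the support of `c₁` and `c` a fixed point of `ρ` in the support of `c₃`; conversely both
3-cycles on such a set are admissible. On the support of `c₃`, `ρ` agrees with `c₃γ`, and `γ` acts
on this `e`-gon as a reflection; having no fixed point, it is a reflection through midpoints of
edges, so `c₃γ` is a reflection through two opposite vertices and has exactly two fixed points.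
Hence there are `2 · k · 2` admissible `τ`.
-/

open Equiv Equiv.Perm Finset

theorem Finset.triple_inter_eq_singleton {α : Type*} [DecidableEq α] {A B C : Finset α}
    (hAB : Disjoint A B) (hAC : Disjoint A C) (hBC : Disjoint B C) {a b c : α}
    (ha : a ∈ A) (hb : b ∈ B) (hc : c ∈ C) :
    {a, b, c} ∩ A = {a} ∧ {a, b, c} ∩ B = {b} ∧ {a, b, c} ∩ C = {c} := by
  refine ⟨?_, ?_, ?_⟩ <;> ext x <;> simp only [mem_inter, mem_insert, mem_singleton] <;>
    grind [disjoint_left]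

theorem List.nodup_triple_of_disjoint {α : Type*} {A B C : Finset α}
    (hAB : _root_.Disjoint A B) (hAC : _root_.Disjoint A C) (hBC : _root_.Disjoint B C) {a b c : α}
    (ha : a ∈ A) (hb : b ∈ B) (hc : c ∈ C) : [a, b, c].Nodup := by
  simp only [List.nodup_cons, List.mem_cons, List.not_mem_nil, or_false, not_or, List.nodup_nil,
    not_false_eq_true, and_true]
  exact ⟨⟨fun h => Finset.disjoint_left.mp hAB ha (h ▸ hb),
    fun h => Finset.disjoint_left.mp hAC ha (h ▸ hc)⟩,
    fun h => Finset.disjoint_left.mp hBC hb (h ▸ hc)⟩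

theorem mul_pow_eq_inv_pow_mul {G : Type*} [Group G] {γ c : G} (hγ : γ * γ = 1)
    (hc : γ * c * γ = c⁻¹) (n : ℕ) : γ * c ^ n = (c ^ n)⁻¹ * γ := by
  have h : SemiconjBy γ c c⁻¹ := by
    rw [SemiconjBy, ← hc, mul_assoc _ γ, hγ, mul_one]
  rw [← inv_pow]
  exact (h.pow_right n).eq

theorem conj_mul_eq_inv_iff {G : Type*} [Group G] {γ σ τ : G} (hγ : γ * γ = 1)
    (hσ : γ * σ * γ = σ⁻¹) :
    γ * (τ * σ) * γ = (τ * σ)⁻¹ ↔ σ * γ * τ * (σ * γ)⁻¹ = τ⁻¹ := by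
  have hσγ : σ * γ = γ * σ⁻¹ := by rw [← hσ, ← mul_assoc, ← mul_assoc, hγ, one_mul]
  have key : γ * (τ * σ) * γ = σ⁻¹ * (σ * γ * τ * (σ * γ)⁻¹) := by
    rw [mul_inv_rev, inv_eq_of_mul_eq_one_left hγ, ← hσγ]
    group
  rw [key, mul_inv_rev τ σ, mul_right_inj]

namespace Equiv.Perm

variable {α : Type*} [DecidableEq α]

theorem _root_.List.formPerm_map (f : Perm α) :
    ∀ l : List α, (l.map f).formPerm = f * l.formPerm * f⁻¹
  | [] => by simp
  | [x] => by simp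
  | x :: y :: l => by
    rw [List.map_cons, List.map_cons, List.formPerm_cons_cons, ← List.map_cons,
      List.formPerm_map f (y :: l), List.formPerm_cons_cons, swap_apply_apply]
    group

theorem conj_formPerm_triple_eq_inv {ρ : Perm α} {a b c : α} (h : [a, b, c].Nodup)
    (ha : ρ a = b) (hb : ρ b = a) (hc : ρ c = c) :
    ρ * [a, b, c].formPerm * ρ⁻¹ = [a, b, c].formPerm⁻¹ := by
  rw [← List.formPerm_map, ← List.formPerm_reverse]
  simp only [List.map_cons, List.map_nil, ha, hb, hc, List.reverse_cons, List.reverse_nil,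
    List.nil_append, List.cons_append]
  rw [← List.formPerm_rotate_one [c, b, a] (List.nodup_reverse.mpr h)]
  rfl

variable [Fintype α]

theorem support_formPerm_triple {a b c : α} (h : [a, b, c].Nodup) :
    [a, b, c].formPerm.support = {a, b, c} := by
  rw [List.support_formPerm_of_nodup _ h (by simp)]
  simp

theorem isThreeCycle_formPerm_triple {a b c : α} (h : [a, b, c].Nodup) :
    [a, b, c].formPerm.IsThreeCycle := by
  rw [← card_support_eq_three_iff, List.support_formPerm_of_nodup _ h (by simp),
    List.toFinset_card_of_nodup h, List.length_cons, List.length_cons, List.length_singleton]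

theorem IsThreeCycle.eq_formPerm {τ : Perm α} (hτ : τ.IsThreeCycle) {a : α} (ha : a ∈ τ.support) :
    τ = [a, τ a, τ (τ a)].formPerm := by
  rw [List.formPerm_cons_cons, List.formPerm_pair]
  exact hτ.eq_swap_mul_swap_iff_mem_support.mpr ha

theorem IsThreeCycle.eq_formPerm_or_eq_formPerm {τ : Perm α} (hτ : τ.IsThreeCycle) {a b c : α}
    (hs : τ.support = {a, b, c}) :
    τ = [a, b, c].formPerm ∨ τ = [a, c, b].formPerm := by
  have ha : a ∈ τ.support := by simp [hs]
  have hτa : τ a ∈ τ.support := apply_mem_support.mpr ha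
  have hτ2a : τ (τ a) ∈ τ.support := apply_mem_support.mpr hτa
  have hne : τ (τ a) ≠ a := by
    have := hτ.nodup_iff_mem_support.mpr ha
    simp only [List.nodup_cons, List.mem_cons] at this
    tauto
  have hne' : τ (τ a) ≠ τ a := mem_support.mp hτa
  rw [hs] at hτa hτ2a
  simp only [mem_insert, mem_singleton] at hτa hτ2a
  rw [hτ.eq_formPerm ha]
  grind [mem_support]

theorem IsThreeCycle.conj_eq_inv {τ ρ : Perm α} (hτ : τ.IsThreeCycle) {a b c : α}
    (h : [a, b, c].Nodup) (hs : τ.support = {a, b, c}) (ha : ρ a = b) (hb : ρ b = a)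
    (hc : ρ c = c) : ρ * τ * ρ⁻¹ = τ⁻¹ := by
  rcases hτ.eq_formPerm_or_eq_formPerm hs with rfl | rfl
  · exact conj_formPerm_triple_eq_inv h ha hb hc
  · have h' : [b, a, c].Nodup := (List.Perm.swap a b [c]).nodup_iff.mpr h
    have hrot : [a, c, b].formPerm = [b, a, c].formPerm := List.formPerm_rotate_one _ h'
    rw [hrot]
    exact conj_formPerm_triple_eq_inv h' hb ha hc

open scoped Classical in
theorem card_filter_isThreeCycle_support_eq {a b c : α} (h : [a, b, c].Nodup) :
    #{τ : Perm α | τ.IsThreeCycle ∧ τ.support = {a, b, c}} = 2 := by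
  have h' : [a, c, b].Nodup := ((List.Perm.swap b c []).cons a).nodup_iff.mpr h
  have hfilter : ({τ : Perm α | τ.IsThreeCycle ∧ τ.support = {a, b, c}} : Finset (Perm α)) =
      {[a, b, c].formPerm, [a, c, b].formPerm} := by
    ext τ
    simp only [mem_filter, mem_univ, true_and, mem_insert, mem_singleton]
    constructor
    · rintro ⟨hτ, hs⟩
      exact hτ.eq_formPerm_or_eq_formPerm hs
    · rintro (rfl | rfl)
      · exact ⟨isThreeCycle_formPerm_triple h, support_formPerm_triple h⟩
      · refine ⟨isThreeCycle_formPerm_triple h', ?_⟩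
        rw [support_formPerm_triple h', pair_comm]
  rw [hfilter, card_pair]
  intro heq
  have := congrArg (· a) heq
  simp only [List.formPerm_apply_head _ _ _ h, List.formPerm_apply_head _ _ _ h'] at this
  simp [this] at h

theorem apply_mem_support_of_conj_eq_inv {ρ τ τ' : Perm α} (h : ρ * τ * ρ⁻¹ = τ'⁻¹) {x : α}
    (hx : x ∈ τ.support) : ρ x ∈ τ'.support := by
  rw [← support_inv, ← h, support_conj]
  exact mem_map_of_mem _ hx

theorem IsThreeCycle.exists_support_eq_of_conj_eq_inv {A B C : Finset α}
    (hAB : _root_.Disjoint A B) (hAC : _root_.Disjoint A C) (hBC : _root_.Disjoint B C)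
    {ρ τ : Perm α}
    (hρA : ∀ x ∈ A, ρ x ∈ B) (hρC : ∀ x ∈ C, ρ x ∈ C) (hτ : τ.IsThreeCycle)
    (hA : #(τ.support ∩ A) = 1) (hB : #(τ.support ∩ B) = 1) (hC : #(τ.support ∩ C) = 1)
    (hinv : ρ * τ * ρ⁻¹ = τ⁻¹) :
    ∃ a ∈ A, ∃ c ∈ C, ρ c = c ∧ τ.support = {a, ρ a, c} := by
  obtain ⟨a, ha⟩ := card_eq_one.mp hA
  obtain ⟨b, hb⟩ := card_eq_one.mp hB
  obtain ⟨c, hc⟩ := card_eq_one.mp hC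
  obtain ⟨haτ, haA⟩ := mem_inter.mp (ha ▸ mem_singleton_self a)
  obtain ⟨hbτ, hbB⟩ := mem_inter.mp (hb ▸ mem_singleton_self b)
  obtain ⟨hcτ, hcC⟩ := mem_inter.mp (hc ▸ mem_singleton_self c)
  have hρa : ρ a = b := mem_singleton.mp <|
    hb ▸ mem_inter.mpr ⟨apply_mem_support_of_conj_eq_inv hinv haτ, hρA a haA⟩
  have hρc : ρ c = c := mem_singleton.mp <|
    hc ▸ mem_inter.mpr ⟨apply_mem_support_of_conj_eq_inv hinv hcτ, hρC c hcC⟩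
  refine ⟨a, haA, c, hcC, hρc, ?_⟩
  rw [hρa]
  have hcard : #({a, b, c} : Finset α) = 3 := by
    simpa using List.toFinset_card_of_nodup (List.nodup_triple_of_disjoint hAB hAC hBC haA hbB hcC)
  refine (eq_of_subset_of_card_le ?_ (hτ.card_support.trans hcard.symm).le).symm
  simp only [insert_subset_iff, singleton_subset_iff]
  exact ⟨haτ, hbτ, hcτ⟩

theorem IsThreeCycle.conj_eq_inv_of_support_eq {A B C : Finset α}
    (hAB : _root_.Disjoint A B) (hAC : _root_.Disjoint A C) (hBC : _root_.Disjoint B C)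
    {ρ τ : Perm α}
    (hρ : ρ * ρ = 1) (hρA : ∀ x ∈ A, ρ x ∈ B) (hτ : τ.IsThreeCycle) {a c : α} (ha : a ∈ A)
    (hc : c ∈ C) (hρc : ρ c = c) (hs : τ.support = {a, ρ a, c}) :
    #(τ.support ∩ A) = 1 ∧ #(τ.support ∩ B) = 1 ∧ #(τ.support ∩ C) = 1 ∧
      ρ * τ * ρ⁻¹ = τ⁻¹ := by
  obtain ⟨hA, hB, hC⟩ := triple_inter_eq_singleton hAB hAC hBC ha (hρA a ha) hc
  rw [hs, hA, hB, hC]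
  refine ⟨card_singleton _, card_singleton _, card_singleton _, ?_⟩
  refine hτ.conj_eq_inv (List.nodup_triple_of_disjoint hAB hAC hBC ha (hρA a ha) hc) hs rfl ?_ hρc
  rw [← Perm.mul_apply, hρ, Perm.one_apply]

open scoped Classical in
theorem card_filter_isThreeCycle_conj_eq_inv {A B C : Finset α}
    (hAB : _root_.Disjoint A B) (hAC : _root_.Disjoint A C) (hBC : _root_.Disjoint B C)
    {ρ : Perm α}
    (hρ : ρ * ρ = 1) (hρA : ∀ x ∈ A, ρ x ∈ B) (hρC : ∀ x ∈ C, ρ x ∈ C) :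
    #{τ : Perm α | τ.IsThreeCycle ∧ #(τ.support ∩ A) = 1 ∧ #(τ.support ∩ B) = 1 ∧
      #(τ.support ∩ C) = 1 ∧ ρ * τ * ρ⁻¹ = τ⁻¹} = 2 * (#A * #{x ∈ C | ρ x = x}) := by
  set F := {x ∈ C | ρ x = x}
  set fiber : α × α → Finset (Perm α) :=
    fun p => {τ | τ.IsThreeCycle ∧ τ.support = {p.1, ρ p.1, p.2}}
  have hS : ({τ : Perm α | τ.IsThreeCycle ∧ #(τ.support ∩ A) = 1 ∧ #(τ.support ∩ B) = 1 ∧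
      #(τ.support ∩ C) = 1 ∧ ρ * τ * ρ⁻¹ = τ⁻¹} : Finset (Perm α)) = (A ×ˢ F).biUnion fiber := by
    ext τ
    simp only [fiber, F, mem_filter, mem_univ, true_and, mem_biUnion, mem_product, Prod.exists]
    constructor
    · rintro ⟨hτ, hA, hB, hC, hinv⟩
      obtain ⟨a, ha, c, hc, hρc, hs⟩ :=
        hτ.exists_support_eq_of_conj_eq_inv hAB hAC hBC hρA hρC hA hB hC hinv
      exact ⟨a, c, ⟨ha, hc, hρc⟩, hτ, hs⟩
    · rintro ⟨a, c, ⟨ha, hc, hρc⟩, hτ, hs⟩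
      exact ⟨hτ, hτ.conj_eq_inv_of_support_eq hAB hAC hBC hρ hρA ha hc hρc hs⟩
  have hdisj : ((A ×ˢ F : Finset (α × α)) : Set (α × α)).PairwiseDisjoint fiber := by
    rintro ⟨a, c⟩ hp ⟨a', c'⟩ hp' hne
    simp only [F, mem_coe, mem_product, mem_filter] at hp hp'
    refine disjoint_left.mpr fun τ hτ hτ' => hne ?_
    simp only [fiber, mem_filter, mem_univ, true_and] at hτ hτ'
    obtain ⟨hA, -, hC⟩ := triple_inter_eq_singleton hAB hAC hBC hp.1 (hρA a hp.1) hp.2.1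
    obtain ⟨hA', -, hC'⟩ := triple_inter_eq_singleton hAB hAC hBC hp'.1 (hρA a' hp'.1) hp'.2.1
    rw [← hτ.2, hτ'.2] at hA hC
    rw [hA] at hA'
    rw [hC] at hC'
    rw [singleton_injective hA', singleton_injective hC']
  rw [hS, card_biUnion hdisj, sum_congr rfl fun p hp => card_filter_isThreeCycle_support_eq
    (List.nodup_triple_of_disjoint hAB hAC hBC (mem_product.mp hp).1
      (hρA p.1 (mem_product.mp hp).1) (mem_filter.mp (mem_product.mp hp).2).1),
    sum_const, card_product, smul_eq_mul]
  ring

theorem IsCycle.pow_apply_eq_self_iff {c : Perm α} (hc : c.IsCycle) {x : α} (hx : x ∈ c.support)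
    (n : ℕ) : (c ^ n) x = x ↔ #c.support ∣ n := by
  rw [← hc.pow_eq_one_iff' (mem_support.mp hx), ← hc.orderOf, orderOf_dvd_iff_pow_eq_one]

theorem IsCycle.exists_mul_apply_eq_self {c γ : Perm α} (hc : c.IsCycle) (hγ : γ * γ = 1)
    (hcγ : γ * c * γ = c⁻¹) (hfree : ∀ x ∈ c.support, γ x ≠ x) :
    ∃ y ∈ c.support, (c * γ) y = y := by
  have hrefl : ∀ (n : ℕ) x, γ ((c ^ n) x) = (c ^ n)⁻¹ (γ x) := fun n =>
    DFunLike.congr_fun (mul_pow_eq_inv_pow_mul hγ hcγ n)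
  obtain ⟨x, hx⟩ := hc.nonempty_support
  have hγx : γ x ∈ c.support :=
    apply_mem_support_of_conj_eq_inv (by rwa [inv_eq_of_mul_eq_one_left hγ]) hx
  obtain ⟨m, hm⟩ := hc.exists_pow_eq (mem_support.mp hx) (mem_support.mp hγx)
  -- `γ (c ^ t x) = c ^ (m - t) x`: if `m = 2t` then `c ^ t x` is fixed by `γ`, and if
  -- `m = 2t + 1` then `c ^ (t + 1) x` is fixed by `cγ`
  obtain ⟨t, rfl | rfl⟩ := Nat.even_or_odd' m
  · refine absurd (?_ : γ ((c ^ t) x) = (c ^ t) x) (hfree _ (pow_apply_mem_support.mpr hx))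
    calc γ ((c ^ t) x) = ((c ^ t)⁻¹ * c ^ (2 * t)) x := by rw [Perm.mul_apply, hm, hrefl]
      _ = (c ^ t) x := by congr 1; group
  · refine ⟨(c ^ (t + 1)) x, pow_apply_mem_support.mpr hx, ?_⟩
    calc (c * γ) ((c ^ (t + 1)) x) = (c * (c ^ (t + 1))⁻¹ * c ^ (2 * t + 1)) x := by
          rw [Perm.mul_apply, hrefl, Perm.mul_apply, Perm.mul_apply, hm]
      _ = (c ^ (t + 1)) x := by congr 1; group

theorem IsCycle.card_filter_mul_apply_eq_self {c γ : Perm α} (hc : c.IsCycle) (hγ : γ * γ = 1)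
    (hcγ : γ * c * γ = c⁻¹) (heven : Even #c.support) {y : α} (hy : y ∈ c.support)
    (hyfix : (c * γ) y = y) : #{x ∈ c.support | (c * γ) x = x} = 2 := by
  obtain ⟨s, hs⟩ := heven
  have hfix : ∀ n : ℕ, (c * γ) ((c ^ n) y) = (c ^ n) y ↔ s ∣ n := by
    intro n
    have hconj : c * γ * c ^ n = (c ^ n)⁻¹ * (c * γ) := by
      rw [mul_assoc, mul_pow_eq_inv_pow_mul hγ hcγ, ← mul_assoc, ← mul_assoc,
        (Commute.self_pow c n).inv_right.eq]
    rw [← Perm.mul_apply, hconj, Perm.mul_apply, hyfix, Perm.inv_eq_iff_eq, eq_comm,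
      ← Perm.mul_apply, ← pow_add, hc.pow_apply_eq_self_iff hy, hs, ← two_mul, ← two_mul,
      Nat.mul_dvd_mul_iff_left two_pos]
  have hpow : c ^ (s + s) = 1 := by rw [← hs, ← hc.orderOf, pow_orderOf_eq_one]
  have hne : (c ^ s) y ≠ y := by
    have := hc.two_le_card_support
    rw [Ne, hc.pow_apply_eq_self_iff hy, hs]
    exact fun h => by have := Nat.le_of_dvd (by omega) h; omega
  have hF : {x ∈ c.support | (c * γ) x = x} = {y, (c ^ s) y} := by
    ext x
    simp only [mem_filter, mem_insert, mem_singleton]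
    constructor
    · rintro ⟨hx, hxfix⟩
      obtain ⟨n, rfl⟩ := hc.exists_pow_eq (mem_support.mp hy) (mem_support.mp hx)
      obtain ⟨q, rfl⟩ := (hfix n).mp hxfix
      obtain ⟨r, rfl | rfl⟩ := Nat.even_or_odd' q
      · left
        rw [show s * (2 * r) = (s + s) * r by ring, pow_mul, hpow, one_pow, Perm.one_apply]
      · right
        rw [show s * (2 * r + 1) = (s + s) * r + s by ring, pow_add, pow_mul, hpow, one_pow,
          one_mul]
    · rintro (rfl | rfl)
      · exact ⟨hy, hyfix⟩
      · exact ⟨pow_apply_mem_support.mpr hy, (hfix s).mpr dvd_rfl⟩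
  rw [hF, card_pair hne.symm]

end Equiv.Perm

theorem count_real_three_cycles_join_pair_and_even_cycle_general
    (d : ℕ) (σ γ : Perm (Fin d))
    (hγ : γ * γ = 1) (hσ : γ * σ * γ = σ⁻¹)
    (c₁ c₂ c₃ : Perm (Fin d)) (k e : ℕ)
    (h₁ : c₁ ∈ σ.cycleFactorsFinset) (h₂ : c₂ ∈ σ.cycleFactorsFinset)
    (h₃ : c₃ ∈ σ.cycleFactorsFinset)
    (h12 : c₁ ≠ c₂) (h31 : c₃ ≠ c₁) (h32 : c₃ ≠ c₂)
    (hpair : γ * c₁ * γ = c₂⁻¹)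
    (hc₁ : c₁.support.card = k)
    (hreal3 : γ * c₃ * γ = c₃⁻¹)
    (he : Even e) (hc₃ : c₃.support.card = e)
    (hnofix : ∀ x ∈ c₃.support, γ x ≠ x) :
    Nat.card {τ : Perm (Fin d) // τ.IsThreeCycle ∧
        (τ.support ∩ c₁.support).card = 1 ∧
        (τ.support ∩ c₂.support).card = 1 ∧
        (τ.support ∩ c₃.support).card = 1 ∧
        γ * (τ * σ) * γ = (τ * σ)⁻¹} = 4 * k := by
  classical
  have hγinv : γ⁻¹ = γ := inv_eq_of_mul_eq_one_left hγ
  have hρ : σ * γ * (σ * γ) = 1 := by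
    rw [← mul_assoc, mul_assoc σ γ σ, mul_assoc σ, hσ, mul_inv_cancel]
  have hdisj {c c'} (hc : c ∈ σ.cycleFactorsFinset) (hc' : c' ∈ σ.cycleFactorsFinset)
      (hne : c ≠ c') : Disjoint c.support c'.support :=
    (cycleFactorsFinset_pairwise_disjoint σ hc hc' hne).disjoint_support
  have hρ_maps {c c'} (hc' : c' ∈ σ.cycleFactorsFinset) (hcc' : γ * c * γ = c'⁻¹) :
      ∀ x ∈ c.support, (σ * γ) x ∈ c'.support := fun x hx =>
    (mem_cycleFactorsFinset_support hc' _).mpr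
      (apply_mem_support_of_conj_eq_inv (by rwa [hγinv]) hx)
  have hcyc₃ := mem_cycleFactorsFinset_iff.mp h₃
  have hF : {x ∈ c₃.support | (σ * γ) x = x} = {x ∈ c₃.support | (c₃ * γ) x = x} :=
    filter_congr fun x hx => by
      have hγx : γ x ∈ c₃.support := apply_mem_support_of_conj_eq_inv (by rwa [hγinv]) hx
      rw [Perm.mul_apply, Perm.mul_apply, hcyc₃.2 _ hγx]
  obtain ⟨y, hy, hyfix⟩ := hcyc₃.1.exists_mul_apply_eq_self hγ hreal3 hnofix
  rw [Nat.card_eq_fintype_card, Fintype.card_subtype]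
  simp_rw [conj_mul_eq_inv_iff hγ hσ]
  rw [card_filter_isThreeCycle_conj_eq_inv (hdisj h₁ h₂ h12) (hdisj h₁ h₃ h31.symm)
    (hdisj h₂ h₃ h32.symm) hρ (hρ_maps h₂ hpair) (hρ_maps h₃ hreal3), hF,
    hcyc₃.1.card_filter_mul_apply_eq_self hγ hreal3 (hc₃ ▸ he) hy hyfix, hc₁]
  ring

/-- Lemma: local multiplicity (i): given a conjugated pair of cycle
factors `c₁, c₂` of `σ` (of size `k`) and a real even cycle factor `c₃` (of even size `e`)
without fixed points of `γ`, the number of 3-cycles `τ` meeting each of the three supports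
in exactly one point with `γ(τσ)γ = (τσ)⁻¹` is `4k`. -/
theorem count_real_three_cycles_join_pair_and_even_cycle
    (d : ℕ) (hd : 1 ≤ d) (σ γ : Perm (Fin d))
    (hγ : γ * γ = 1) (hσ : γ * σ * γ = σ⁻¹)
    (c₁ c₂ c₃ : Perm (Fin d)) (k e : ℕ) (hk : 1 ≤ k)
    (h₁ : c₁ ∈ σ.cycleFactorsFinset) (h₂ : c₂ ∈ σ.cycleFactorsFinset)
    (h₃ : c₃ ∈ σ.cycleFactorsFinset)
    (h12 : c₁ ≠ c₂) (h31 : c₃ ≠ c₁) (h32 : c₃ ≠ c₂)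
    (hpair : γ * c₁ * γ = c₂⁻¹)
    (hc₁ : c₁.support.card = k) (hc₂ : c₂.support.card = k)
    (hreal3 : γ * c₃ * γ = c₃⁻¹)
    (he : Even e) (hc₃ : c₃.support.card = e)
    (hnofix : ∀ x ∈ c₃.support, γ x ≠ x) :
    Nat.card {τ : Perm (Fin d) // τ.IsThreeCycle ∧
        (τ.support ∩ c₁.support).card = 1 ∧
        (τ.support ∩ c₂.support).card = 1 ∧
        (τ.support ∩ c₃.support).card = 1 ∧
        γ * (τ * σ) * γ = (τ * σ)⁻¹} = 4 * k :=
  count_real_three_cycles_join_pair_and_even_cycle_general d σ γ hγ hσ c₁ c₂ c₃ k e h₁ h₂ h₃ h12 h31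
    h32 hpair hc₁ hreal3 he hc₃ hnofix
end

section
/- Let d ≥ 1 and let σ, γ ∈ S_d satisfy γ² = id and γ∘σ∘γ = σ⁻¹. Let c₁, c₂ be two distinct cycle factors of σ forming a conjugated pair with respect to γ (i.e. γ∘c₁∘γ = c₂⁻¹), each with support of cardinality k ≥ 1, and let c₃ be a cycle factor of σ distinct from c₁ and c₂ with γ∘c₃∘γ = c₃⁻¹, whose support has odd cardinality o. Then the number of 3-cycles τ ∈ S_d such that the support of τ meets the support of each of c₁, c₂, c₃ in exactly one point and γ∘(τ∘σ)∘γ = (τ∘σ)⁻¹ equals 2k. -/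
open Equiv Equiv.Perm

section AuxLemmas

variable {α : Type*} [DecidableEq α] [Fintype α]

private lemma myAux_existsUnique_fixed (c g : Perm α) (hc : c.IsCycle)
    (hg2 : g * g = 1) (hrev : g * c * g = c⁻¹) (ho : Odd c.support.card) :
    ∃! x, x ∈ c.support ∧ g x = x := by
  have hginv : g⁻¹ = g := inv_eq_of_mul_eq_one_right hg2
  have hgg : ∀ x, g (g x) = x := fun x => by
    have : (g * g) x = (1 : Perm α) x := by rw [hg2]
    simpa using this
  have hco : c.IsCycleOn (c.support : Set α) := by
    rw [Perm.coe_support_eq_set_support]; exact hc.isCycleOn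
  have hconj : ∀ n : ℤ, g * c ^ n * g = c ^ (-n) := by
    intro n
    have : (g * c * g⁻¹) ^ n = g * c ^ n * g⁻¹ := conj_zpow
    rw [hginv] at this
    rw [← this, hrev, inv_zpow, zpow_neg]
  have happ : ∀ (n : ℤ) (x : α), g ((c ^ n) x) = (c ^ (-n)) (g x) := by
    intro n x
    have h1 : (g * c ^ n * g) (g x) = (c ^ (-n)) (g x) := by rw [hconj]
    simpa [Perm.mul_apply, hgg] using h1
  have huniq : ∀ x x', x ∈ c.support → g x = x → x' ∈ c.support → g x' = x' → x' = x := by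
    intro x x' hx hgx hx' hgx'
    obtain ⟨i, hi⟩ : ∃ i : ℤ, (c ^ i) x = x' :=
      hc.exists_zpow_eq (Perm.mem_support.mp hx) (Perm.mem_support.mp hx')
    have h2 : (c ^ i) x = (c ^ (-i)) x := by
      conv_lhs => rw [hi, ← hgx', ← hi, happ, hgx]
    rw [hco.zpow_apply_eq_zpow_apply hx, Int.ModEq] at h2
    have hdvd : (c.support.card : ℤ) ∣ i - (-i) := Int.ModEq.dvd (Int.ModEq.symm h2)
    have hdvd2 : (c.support.card : ℤ) ∣ i * 2 := by
      have : i - (-i) = i * 2 := by ring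
      rwa [this] at hdvd
    have hcop : IsCoprime (c.support.card : ℤ) (2 : ℤ) := by
      have h := Nat.isCoprime_iff_coprime.mpr ho.coprime_two_right
      exact_mod_cast h
    have : (c.support.card : ℤ) ∣ i := hcop.dvd_of_dvd_mul_right hdvd2
    rw [← hi, hco.zpow_apply_eq hx]
    exact this
  have hsupp_ne : c.support.Nonempty := by
    rw [← Finset.card_pos]
    rcases ho with ⟨t, ht⟩; omega
  obtain ⟨y, hy⟩ := hsupp_ne
  have hgy : g y ∈ c.support := by
    have : g y ∈ (g * c * g⁻¹).support := by
      rw [Perm.support_conj]; exact Finset.mem_map_of_mem _ hy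
    rwa [hginv, hrev, Perm.support_inv] at this
  obtain ⟨m, hm⟩ : ∃ m : ℤ, (c ^ m) y = g y :=
    hc.exists_zpow_eq (Perm.mem_support.mp hy) (Perm.mem_support.mp hgy)
  obtain ⟨t, ht⟩ := ho
  refine ⟨(c ^ ((t + 1 : ℤ) * m)) y, ⟨?_, ?_⟩, fun x' hx' => huniq _ _ ?_ ?_ hx'.1 hx'.2⟩
  · exact Perm.zpow_apply_mem_support.mpr hy
  · rw [happ, ← hm, ← Perm.mul_apply, ← zpow_add]
    rw [hco.zpow_apply_eq_zpow_apply hy]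
    rw [Int.modEq_iff_dvd]
    refine ⟨m, ?_⟩
    push_cast [ht]; ring
  · exact Perm.zpow_apply_mem_support.mpr hy
  · rw [happ, ← hm, ← Perm.mul_apply, ← zpow_add]
    rw [hco.zpow_apply_eq_zpow_apply hy]
    rw [Int.modEq_iff_dvd]
    refine ⟨m, ?_⟩
    push_cast [ht]; ring

private lemma myAux_swap_identity (a b c : α) (hab : a ≠ b) (hac : a ≠ c) (hbc : b ≠ c) :
    swap b c * swap b a = swap a b * swap a c := by
  ext x
  simp only [Perm.mul_apply, swap_apply_def]
  split_ifs <;> simp_all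

private lemma myAux_threeCycle_support (τ : Perm α) (h3 : τ.IsThreeCycle) (a b c : α)
    (hab : a ≠ b) (hac : a ≠ c) (hbc : b ≠ c)
    (ha : a ∈ τ.support) (hb : b ∈ τ.support) (hc : c ∈ τ.support) :
    τ.support = {a, b, c} := by
  have hsub : ({a, b, c} : Finset α) ⊆ τ.support := by
    intro x hx
    simp only [Finset.mem_insert, Finset.mem_singleton] at hx
    rcases hx with rfl | rfl | rfl <;> assumption
  have hcard3 : ({a, b, c} : Finset α).card = 3 :=
    Finset.card_eq_three.mpr ⟨a, b, c, hab, hac, hbc, rfl⟩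
  refine (Finset.eq_of_subset_of_card_le hsub ?_).symm
  rw [hcard3, h3.card_support]

private lemma myAux_eq_of_threeCycle (τ : Perm α) (a b c : α)
    (hab : a ≠ b) (hac : a ≠ c) (hbc : b ≠ c)
    (hsupp : τ.support = {a, b, c}) (ha : τ a = b) :
    τ = swap a c * swap a b := by
  have hbs : b ∈ τ.support := by rw [hsupp]; simp
  have hcs : c ∈ τ.support := by rw [hsupp]; simp
  have hτb : τ b = c := by
    have h1 : τ b ∈ τ.support := Perm.apply_mem_support.mpr hbs
    rw [hsupp] at h1
    simp only [Finset.mem_insert, Finset.mem_singleton] at h1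
    have hne_b : τ b ≠ b := Perm.mem_support.mp hbs
    have hne_a : τ b ≠ a := by
      intro h
      have h2 : τ c ∈ τ.support := Perm.apply_mem_support.mpr hcs
      rw [hsupp] at h2
      simp only [Finset.mem_insert, Finset.mem_singleton] at h2
      have hne_c : τ c ≠ c := Perm.mem_support.mp hcs
      have hcb : τ c ≠ b := fun hh => hac (τ.injective (ha.trans hh.symm))
      have hca : τ c ≠ a := fun hh => hbc (τ.injective (h.trans hh.symm))
      tauto
    tauto
  have hτc : τ c = a := by
    have h2 : τ c ∈ τ.support := Perm.apply_mem_support.mpr hcs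
    rw [hsupp] at h2
    simp only [Finset.mem_insert, Finset.mem_singleton] at h2
    have hne_c : τ c ≠ c := Perm.mem_support.mp hcs
    have hcb : τ c ≠ b := fun hh => hac (τ.injective (ha.trans hh.symm))
    tauto
  ext x
  by_cases hxa : x = a
  · subst hxa
    rw [ha, Perm.mul_apply, swap_apply_left, swap_apply_of_ne_of_ne hab.symm hbc]
  by_cases hxb : x = b
  · subst hxb
    rw [hτb, Perm.mul_apply, swap_apply_right, swap_apply_left]
  by_cases hxc : x = c
  · subst hxc
    rw [hτc, Perm.mul_apply, swap_apply_of_ne_of_ne (Ne.symm hac) (Ne.symm hbc),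
      swap_apply_right]
  · have hxs : x ∉ τ.support := by
      rw [hsupp]; simp [hxa, hxb, hxc]
    rw [Perm.notMem_support.mp hxs, Perm.mul_apply,
      swap_apply_of_ne_of_ne hxa hxb, swap_apply_of_ne_of_ne hxa hxc]

private lemma myAux_card_inter_one (t s : Finset α) (u : α) (hut : u ∈ t) (hus : u ∈ s)
    (huniq : ∀ x ∈ t, x ∈ s → x = u) : (t ∩ s).card = 1 := by
  rw [Finset.card_eq_one]
  refine ⟨u, ?_⟩
  ext x
  simp only [Finset.mem_inter, Finset.mem_singleton]
  exact ⟨fun ⟨h1, h2⟩ => huniq x h1 h2, fun h => h ▸ ⟨hut, hus⟩⟩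

end AuxLemmas

/-- Lemma: local multiplicity (ii): given a conjugated pair of cycle
factors `c₁, c₂` of `σ` (of size `k`) and a real odd cycle factor `c₃` (of odd size `o`),
the number of 3-cycles `τ` meeting each of the three supports in exactly one point with
`γ(τσ)γ = (τσ)⁻¹` is `2k`. -/
theorem count_real_three_cycles_join_pair_and_odd_cycle
    (d : ℕ) (hd : 1 ≤ d) (σ γ : Perm (Fin d))
    (hγ : γ * γ = 1) (hσ : γ * σ * γ = σ⁻¹)
    (c₁ c₂ c₃ : Perm (Fin d)) (k o : ℕ) (hk : 1 ≤ k)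
    (h₁ : c₁ ∈ σ.cycleFactorsFinset) (h₂ : c₂ ∈ σ.cycleFactorsFinset)
    (h₃ : c₃ ∈ σ.cycleFactorsFinset)
    (h12 : c₁ ≠ c₂) (h31 : c₃ ≠ c₁) (h32 : c₃ ≠ c₂)
    (hpair : γ * c₁ * γ = c₂⁻¹)
    (hc₁ : c₁.support.card = k) (hc₂ : c₂.support.card = k)
    (hreal3 : γ * c₃ * γ = c₃⁻¹)
    (ho : Odd o) (hc₃ : c₃.support.card = o) :
    Nat.card {τ : Perm (Fin d) // τ.IsThreeCycle ∧
        (τ.support ∩ c₁.support).card = 1 ∧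
        (τ.support ∩ c₂.support).card = 1 ∧
        (τ.support ∩ c₃.support).card = 1 ∧
        γ * (τ * σ) * γ = (τ * σ)⁻¹} = 2 * k := by
  classical
  have hγinv : γ⁻¹ = γ := inv_eq_of_mul_eq_one_right hγ
  set g : Perm (Fin d) := σ * γ with hgdef
  have hγσ : γ * σ = σ⁻¹ * γ := by
    calc γ * σ = (γ * σ * γ) * γ := by rw [mul_assoc, hγ, mul_one]
    _ = σ⁻¹ * γ := by rw [hσ]
  have hg2 : g * g = 1 := by
    show σ * γ * (σ * γ) = 1
    calc σ * γ * (σ * γ) = σ * (γ * σ) * γ := by group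
    _ = σ * (σ⁻¹ * γ) * γ := by rw [hγσ]
    _ = 1 := by rw [← mul_assoc, mul_inv_cancel, one_mul, hγ]
  have hginv : g⁻¹ = g := inv_eq_of_mul_eq_one_right hg2
  have hgg : ∀ x, g (g x) = x := fun x => by
    have : (g * g) x = (1 : Perm (Fin d)) x := by rw [hg2]
    simpa using this
  have hcomm2 : Commute σ c₂ := (self_mem_cycle_factors_commute h₂).symm
  have hcomm3 : Commute σ c₃ := (self_mem_cycle_factors_commute h₃).symm
  have hgc1 : g * c₁ * g⁻¹ = c₂⁻¹ := by
    show σ * γ * c₁ * (σ * γ)⁻¹ = c₂⁻¹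
    rw [mul_inv_rev, hγinv]
    calc σ * γ * c₁ * (γ * σ⁻¹) = σ * (γ * c₁ * γ) * σ⁻¹ := by group
    _ = σ * c₂⁻¹ * σ⁻¹ := by rw [hpair]
    _ = c₂⁻¹ := by rw [(hcomm2.inv_right).eq, mul_assoc, mul_inv_cancel, mul_one]
  have hgc3 : g * c₃ * g⁻¹ = c₃⁻¹ := by
    show σ * γ * c₃ * (σ * γ)⁻¹ = c₃⁻¹
    rw [mul_inv_rev, hγinv]
    calc σ * γ * c₃ * (γ * σ⁻¹) = σ * (γ * c₃ * γ) * σ⁻¹ := by group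
    _ = σ * c₃⁻¹ * σ⁻¹ := by rw [hreal3]
    _ = c₃⁻¹ := by rw [(hcomm3.inv_right).eq, mul_assoc, mul_inv_cancel, mul_one]
  have hS2map : c₂.support = c₁.support.map g.toEmbedding := by
    rw [← Perm.support_conj (σ := g), hgc1, Perm.support_inv]
  have hS3map : c₃.support = c₃.support.map g.toEmbedding := by
    rw [← Perm.support_conj (σ := g), hgc3, Perm.support_inv]
  have hgS1 : ∀ x ∈ c₁.support, g x ∈ c₂.support := by
    intro x hx
    rw [hS2map]
    exact Finset.mem_map_of_mem _ hx
  have hgS3 : ∀ x ∈ c₃.support, g x ∈ c₃.support := by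
    intro x hx
    rw [hS3map]
    exact Finset.mem_map_of_mem _ hx
  have hd12 : Disjoint c₁.support c₂.support :=
    ((σ.cycleFactorsFinset_pairwise_disjoint h₁ h₂ h12)).disjoint_support
  have hd13 : Disjoint c₁.support c₃.support :=
    ((σ.cycleFactorsFinset_pairwise_disjoint h₁ h₃ (Ne.symm h31))).disjoint_support
  have hd23 : Disjoint c₂.support c₃.support :=
    ((σ.cycleFactorsFinset_pairwise_disjoint h₂ h₃ (Ne.symm h32))).disjoint_support
  have hgc3' : g * c₃ * g = c₃⁻¹ := by rw [← hgc3, hginv]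
  obtain ⟨x₀, ⟨hx₀s, hx₀f⟩, hx₀uniq⟩ :=
    myAux_existsUnique_fixed c₃ g (mem_cycleFactorsFinset_iff.mp h₃).1 hg2 hgc3'
      (by rw [hc₃]; exact ho)
  have hgiff : ∀ τ : Perm (Fin d),
      (γ * (τ * σ) * γ = (τ * σ)⁻¹) ↔ g * τ * g = τ⁻¹ := by
    intro τ
    constructor
    · intro h
      show σ * γ * τ * (σ * γ) = τ⁻¹
      calc σ * γ * τ * (σ * γ) = σ * (γ * (τ * σ) * γ) := by group
      _ = σ * (τ * σ)⁻¹ := by rw [h]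
      _ = τ⁻¹ := by rw [mul_inv_rev, ← mul_assoc, mul_inv_cancel, one_mul]
    · intro h
      have h' : σ * γ * τ * (σ * γ) = τ⁻¹ := h
      calc γ * (τ * σ) * γ = σ⁻¹ * (σ * γ * τ * (σ * γ)) := by group
      _ = σ⁻¹ * τ⁻¹ := by rw [h']
      _ = (τ * σ)⁻¹ := by rw [mul_inv_rev]
  set f : Fin d × Bool → Perm (Fin d) := fun p =>
    if p.2 then swap p.1 x₀ * swap p.1 (g p.1) else swap p.1 (g p.1) * swap p.1 x₀
    with hfdef
  set T : Finset (Perm (Fin d)) :=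
    (c₁.support ×ˢ (Finset.univ : Finset Bool)).image f with hTdef
  have hftrue : ∀ a : Fin d, f (a, true) = swap a x₀ * swap a (g a) := fun a => by
    simp [hfdef]
  have hffalse : ∀ a : Fin d, f (a, false) = swap a (g a) * swap a x₀ := fun a => by
    simp [hfdef]
  have hfinv : ∀ a : Fin d, f (a, false) = (f (a, true))⁻¹ := fun a => by
    rw [hftrue, hffalse, mul_inv_rev, swap_inv, swap_inv]
  -- distinctness and membership facts for a ∈ S₁
  have hdist : ∀ a ∈ c₁.support, a ≠ g a ∧ a ≠ x₀ ∧ g a ≠ x₀ := by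
    intro a ha
    have hga : g a ∈ c₂.support := hgS1 a ha
    refine ⟨?_, ?_, ?_⟩
    · intro h; exact Finset.disjoint_left.mp hd12 ha (h ▸ hga)
    · intro h; exact Finset.disjoint_left.mp hd13 ha (h ▸ hx₀s)
    · intro h; exact Finset.disjoint_left.mp hd23 hga (h ▸ hx₀s)
  -- in the "true" case the parametrized permutation, with its properties
  have hτ₀props : ∀ a ∈ c₁.support, (swap a x₀ * swap a (g a)).IsThreeCycle ∧
      (swap a x₀ * swap a (g a)).support = {a, x₀, g a} ∧
      g * (swap a x₀ * swap a (g a)) * g = (swap a x₀ * swap a (g a))⁻¹ := by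
    intro a ha
    obtain ⟨hax, haxo, hgaxo⟩ := hdist a ha
    have h3 : (swap a x₀ * swap a (g a)).IsThreeCycle :=
      isThreeCycle_swap_mul_swap_same haxo hax (fun h => hgaxo h.symm)
    refine ⟨h3, ?_, ?_⟩
    · refine myAux_threeCycle_support _ h3 a x₀ (g a) haxo hax (fun h => hgaxo h.symm)
        ?_ ?_ ?_ <;> rw [Perm.mem_support]
      · rw [Perm.mul_apply, swap_apply_left, swap_apply_of_ne_of_ne (Ne.symm hax) hgaxo]
        exact Ne.symm hax
      · rw [Perm.mul_apply, swap_apply_of_ne_of_ne (Ne.symm haxo) (Ne.symm hgaxo),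
          swap_apply_right]
        exact haxo
      · rw [Perm.mul_apply, swap_apply_right, swap_apply_left]
        exact Ne.symm hgaxo
    · have e1 : g * swap a x₀ * g⁻¹ = swap (g a) x₀ := by
        rw [← swap_apply_apply, hx₀f]
      have e2 : g * swap a (g a) * g⁻¹ = swap (g a) a := by
        rw [← swap_apply_apply, hgg]
      calc g * (swap a x₀ * swap a (g a)) * g
          = g * (swap a x₀ * swap a (g a)) * g⁻¹ := by rw [hginv]
      _ = (g * swap a x₀ * g⁻¹) * (g * swap a (g a) * g⁻¹) := by group
      _ = swap (g a) x₀ * swap (g a) a := by rw [e1, e2]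
      _ = swap a (g a) * swap a x₀ := myAux_swap_identity a (g a) x₀ hax haxo hgaxo
      _ = (swap a x₀ * swap a (g a))⁻¹ := by rw [mul_inv_rev, swap_inv, swap_inv]
  -- the intersection cardinalities for the set {a, x₀, g a}
  have hints : ∀ a ∈ c₁.support,
      (({a, x₀, g a} : Finset (Fin d)) ∩ c₁.support).card = 1 ∧
      (({a, x₀, g a} : Finset (Fin d)) ∩ c₂.support).card = 1 ∧
      (({a, x₀, g a} : Finset (Fin d)) ∩ c₃.support).card = 1 := by
    intro a ha
    have hga : g a ∈ c₂.support := hgS1 a ha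
    have hmem : ∀ x, x ∈ ({a, x₀, g a} : Finset (Fin d)) ↔ x = a ∨ x = x₀ ∨ x = g a := by
      intro x; simp
    refine ⟨myAux_card_inter_one _ _ a (by simp) ha ?_,
      myAux_card_inter_one _ _ (g a) (by simp) hga ?_,
      myAux_card_inter_one _ _ x₀ (by simp) hx₀s ?_⟩
    · intro x hx hxs
      rcases (hmem x).mp hx with rfl | rfl | rfl
      · rfl
      · exact absurd hxs (Finset.disjoint_right.mp hd13 hx₀s)
      · exact absurd hxs (Finset.disjoint_right.mp hd12 hga)
    · intro x hx hxs
      rcases (hmem x).mp hx with rfl | rfl | rfl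
      · exact absurd hxs (Finset.disjoint_left.mp hd12 ha)
      · exact absurd hxs (Finset.disjoint_right.mp hd23 hx₀s)
      · rfl
    · intro x hx hxs
      rcases (hmem x).mp hx with rfl | rfl | rfl
      · exact absurd hxs (Finset.disjoint_left.mp hd13 ha)
      · rfl
      · exact absurd hxs (Finset.disjoint_left.mp hd23 hga)
  -- the main characterization
  have hP : ∀ τ : Perm (Fin d), (τ.IsThreeCycle ∧
      (τ.support ∩ c₁.support).card = 1 ∧
      (τ.support ∩ c₂.support).card = 1 ∧
      (τ.support ∩ c₃.support).card = 1 ∧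
      γ * (τ * σ) * γ = (τ * σ)⁻¹) ↔ τ ∈ T := by
    intro τ
    constructor
    · rintro ⟨h3c, hi1, hi2, hi3, hcond⟩
      have hgτ : g * τ * g = τ⁻¹ := (hgiff τ).mp hcond
      obtain ⟨a, hae⟩ := Finset.card_eq_one.mp hi1
      obtain ⟨b, hbe⟩ := Finset.card_eq_one.mp hi2
      obtain ⟨c, hce⟩ := Finset.card_eq_one.mp hi3
      have haτ : a ∈ τ.support := (Finset.mem_inter.mp (hae ▸ Finset.mem_singleton_self a)).1
      have ha1 : a ∈ c₁.support := (Finset.mem_inter.mp (hae ▸ Finset.mem_singleton_self a)).2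
      have hbτ : b ∈ τ.support := (Finset.mem_inter.mp (hbe ▸ Finset.mem_singleton_self b)).1
      have hb2 : b ∈ c₂.support := (Finset.mem_inter.mp (hbe ▸ Finset.mem_singleton_self b)).2
      have hcτ : c ∈ τ.support := (Finset.mem_inter.mp (hce ▸ Finset.mem_singleton_self c)).1
      have hc3 : c ∈ c₃.support := (Finset.mem_inter.mp (hce ▸ Finset.mem_singleton_self c)).2
      have hab : a ≠ b := fun h => Finset.disjoint_left.mp hd12 ha1 (h ▸ hb2)
      have hac : a ≠ c := fun h => Finset.disjoint_left.mp hd13 ha1 (h ▸ hc3)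
      have hbc : b ≠ c := fun h => Finset.disjoint_left.mp hd23 hb2 (h ▸ hc3)
      have hsupp : τ.support = {a, b, c} :=
        myAux_threeCycle_support τ h3c a b c hab hac hbc haτ hbτ hcτ
      have hmapτ : ∀ x ∈ τ.support, g x ∈ τ.support := by
        intro x hx
        have hgx : g x ∈ (g * τ * g⁻¹).support := by
          rw [Perm.support_conj]; exact Finset.mem_map_of_mem _ hx
        rw [hginv, hgτ, Perm.support_inv] at hgx
        exact hgx
      have hga_mem : g a ∈ τ.support := hmapτ a haτ
      have hga2 : g a ∈ c₂.support := hgS1 a ha1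
      have hgab : g a = b := by
        rw [hsupp] at hga_mem
        simp only [Finset.mem_insert, Finset.mem_singleton] at hga_mem
        rcases hga_mem with h | h | h
        · rw [h] at hga2
          exact absurd hga2 (Finset.disjoint_left.mp hd12 ha1)
        · exact h
        · rw [h] at hga2
          exact absurd hc3 (Finset.disjoint_left.mp hd23 hga2)
      have hgc_mem : g c ∈ τ.support := hmapτ c hcτ
      have hgc3mem : g c ∈ c₃.support := hgS3 c hc3
      have hgcc : g c = c := by
        rw [hsupp] at hgc_mem
        simp only [Finset.mem_insert, Finset.mem_singleton] at hgc_mem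
        rcases hgc_mem with h | h | h
        · rw [h] at hgc3mem
          exact absurd hgc3mem (Finset.disjoint_left.mp hd13 ha1)
        · rw [h] at hgc3mem
          exact absurd hgc3mem (Finset.disjoint_left.mp hd23 hb2)
        · exact h
      have hcx₀ : c = x₀ := by
        have := hx₀uniq c ⟨hc3, hgcc⟩
        exact this
      have hτa_mem : τ a ∈ τ.support := Perm.apply_mem_support.mpr haτ
      have hτa_ne : τ a ≠ a := Perm.mem_support.mp haτ
      rw [hsupp] at hτa_mem
      simp only [Finset.mem_insert, Finset.mem_singleton] at hτa_mem
      rw [hTdef, Finset.mem_image]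
      rcases hτa_mem with h | h | h
      · exact absurd h hτa_ne
      · -- τ a = b : τ = swap a c * swap a b = f (a, true)
        refine ⟨(a, true), Finset.mem_product.mpr ⟨ha1, Finset.mem_univ _⟩, ?_⟩
        have heq := myAux_eq_of_threeCycle τ a b c hab hac hbc hsupp h
        rw [hftrue, hgab, ← hcx₀]
        exact heq.symm
      · -- τ a = c : τ = swap a b * swap a c = f (a, false)
        refine ⟨(a, false), Finset.mem_product.mpr ⟨ha1, Finset.mem_univ _⟩, ?_⟩
        have hsupp' : τ.support = {a, c, b} := by
          rw [hsupp]; ext x; simp only [Finset.mem_insert, Finset.mem_singleton]; tauto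
        have heq := myAux_eq_of_threeCycle τ a c b hac hab (Ne.symm hbc) hsupp' h
        rw [hffalse, hgab, ← hcx₀]
        exact heq.symm
    · intro hτT
      rw [hTdef, Finset.mem_image] at hτT
      obtain ⟨⟨a, bb⟩, hmem, hfab⟩ := hτT
      have ha1 : a ∈ c₁.support := (Finset.mem_product.mp hmem).1
      obtain ⟨h3, hsupp0, hreal0⟩ := hτ₀props a ha1
      obtain ⟨hI1, hI2, hI3⟩ := hints a ha1
      cases bb with
      | true =>
        have hτeq : τ = swap a x₀ * swap a (g a) := by
          rw [← hfab, hftrue]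
        subst hτeq
        exact ⟨h3, by rw [hsupp0]; exact hI1, by rw [hsupp0]; exact hI2,
          by rw [hsupp0]; exact hI3, (hgiff _).mpr hreal0⟩
      | false =>
        have hτeq : τ = (swap a x₀ * swap a (g a))⁻¹ := by
          rw [← hfab, hfinv, hftrue]
        subst hτeq
        have hsuppinv : ((swap a x₀ * swap a (g a))⁻¹).support = {a, x₀, g a} := by
          rw [Perm.support_inv, hsupp0]
        have hrealinv : g * (swap a x₀ * swap a (g a))⁻¹ * g =
            ((swap a x₀ * swap a (g a))⁻¹)⁻¹ := by
          rw [inv_inv]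
          calc g * (swap a x₀ * swap a (g a))⁻¹ * g
              = (g⁻¹ * (swap a x₀ * swap a (g a)) * g⁻¹)⁻¹ := by group
          _ = (g * (swap a x₀ * swap a (g a)) * g)⁻¹ := by rw [hginv]
          _ = ((swap a x₀ * swap a (g a))⁻¹)⁻¹ := by rw [hreal0]
          _ = swap a x₀ * swap a (g a) := inv_inv _
        exact ⟨h3.inv, by rw [hsuppinv]; exact hI1, by rw [hsuppinv]; exact hI2,
          by rw [hsuppinv]; exact hI3, (hgiff _).mpr hrealinv⟩
  -- counting
  have hcongr := Nat.card_congr (Equiv.subtypeEquivRight hP)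
  rw [hcongr]
  have hcardT : Nat.card {τ : Perm (Fin d) // τ ∈ T} = T.card := Nat.card_eq_finsetCard T
  rw [hcardT]
  have hinj : Set.InjOn f ↑(c₁.support ×ˢ (Finset.univ : Finset Bool)) := by
    rintro ⟨a, bb⟩ hp ⟨a', bb'⟩ hq hfeq
    simp only [Finset.coe_product, Set.mem_prod, Finset.mem_coe] at hp hq
    have ha1 : a ∈ c₁.support := hp.1
    have ha1' : a' ∈ c₁.support := hq.1
    obtain ⟨_, hsupp0, _⟩ := hτ₀props a ha1
    obtain ⟨_, hsupp0', _⟩ := hτ₀props a' ha1'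
    have hsuppf : (f (a, bb)).support = {a, x₀, g a} := by
      cases bb with
      | true => rw [hftrue]; exact hsupp0
      | false => rw [hfinv, Perm.support_inv, hftrue]; exact hsupp0
    have hsuppf' : (f (a', bb')).support = {a', x₀, g a'} := by
      cases bb' with
      | true => rw [hftrue]; exact hsupp0'
      | false => rw [hfinv, Perm.support_inv, hftrue]; exact hsupp0'
    have haa : a = a' := by
      have ha'mem : a' ∈ ({a, x₀, g a} : Finset (Fin d)) := by
        rw [← hsuppf, hfeq, hsuppf']
        simp
      simp only [Finset.mem_insert, Finset.mem_singleton] at ha'mem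
      rcases ha'mem with h | h | h
      · exact h.symm
      · exact absurd (h ▸ ha1') (Finset.disjoint_right.mp hd13 hx₀s)
      · exact absurd (h ▸ ha1') (Finset.disjoint_right.mp hd12 (hgS1 a ha1))
    subst haa
    obtain ⟨hax, haxo, hgaxo⟩ := hdist a ha1
    have hapt : (f (a, true)) a = g a := by
      rw [hftrue, Perm.mul_apply, swap_apply_left,
        swap_apply_of_ne_of_ne (Ne.symm hax) hgaxo]
    have hapf : (f (a, false)) a = x₀ := by
      rw [hffalse, Perm.mul_apply, swap_apply_left,
        swap_apply_of_ne_of_ne (Ne.symm haxo) (Ne.symm hgaxo)]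
    have hbb : bb = bb' := by
      cases bb <;> cases bb'
      · rfl
      · exfalso
        have h := congrArg (fun π : Perm (Fin d) => π a) hfeq
        rw [hapf, hapt] at h
        exact hgaxo h.symm
      · exfalso
        have h := congrArg (fun π : Perm (Fin d) => π a) hfeq
        rw [hapt, hapf] at h
        exact hgaxo h
      · rfl
    rw [hbb]
  have hTcard : T.card = (c₁.support ×ˢ (Finset.univ : Finset Bool)).card :=
    Finset.card_image_of_injOn hinj
  rw [hTcard, Finset.card_product, hc₁]
  simp [mul_comm]
end

section
/- Let d ≥ 1, let σ ∈ S_d, and let c₁, c₂, c₃ be three pairwise distinct cycle factors of σ. Let τ = (a b c) be a 3-cycle with a in the support of c₁, b in the support of c₂, and c in the support of c₃. Then the disjoint cycle decomposition of τ∘σ consists of all cycle factors of σ other than c₁, c₂, c₃, together with one single cycle whose support is the union of the supports of c₁, c₂ and c₃. -/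
open Equiv Equiv.Perm

/-! A 3-cycle `(a b c) = swap a c * swap a b` is a product of two transpositions. Multiplying a
permutation on the left by `swap x y`, where `x` and `y` lie in distinct cycle factors `c` and
`d`, replaces these two factors by the single cycle `swap x y * (d * c)`, which runs through the
cycle of `x` and then through the cycle of `y`. Doing this for `swap a b` joins `c₁` and `c₂`,
and then `swap a c` joins the result with `c₃`. -/

namespace Equiv.Perm

variable {α : Type*}

theorem SameCycle.of_apply_eq_of_ne [Finite α] {g c : Perm α} {u w : α}
    (hgc : ∀ z, c.SameCycle z u → z ≠ u → g z = c z) (hw : c.SameCycle w u) :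
    g.SameCycle w u := by
  obtain ⟨n, -, hn⟩ := hw.exists_pow_eq'
  induction n generalizing w with
  | zero => rw [← hn]; rfl
  | succ n ih =>
    by_cases hwu : w = u
    · rw [hwu]
    have hcw : c.SameCycle (c w) u := sameCycle_apply_left.mpr hw
    have hgw : g w = c w := hgc w hw hwu
    exact sameCycle_apply_left.mp (hgw ▸ ih hcw (by rwa [pow_succ, mul_apply] at hn))

variable [DecidableEq α] [Fintype α] {c d : Perm α} {x y : α}

theorem Disjoint.swap_mul_mul_apply (hcd : c.Disjoint d) (hy : y ∈ d.support) {z : α}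
    (hz : z ∈ c.support) (hzx : c z ≠ x) : (swap x y * (d * c)) z = c z := by
  have hcz : c z ∈ c.support := apply_mem_support.mpr hz
  have hdcz : d (c z) = c z := (hcd (c z)).resolve_left (mem_support.mp hcz)
  have hczy : c z ≠ y := fun h => (disjoint_iff_disjoint_support.mp hcd).notMem_of_mem_left_finset
    hcz (h ▸ hy)
  rw [mul_apply, mul_apply, hdcz, swap_apply_of_ne_of_ne hzx hczy]

theorem Disjoint.swap_mul_mul_apply_of_apply_eq (hcd : c.Disjoint d) (hx : x ∈ c.support)
    {u : α} (hu : c u = x) : (swap x y * (d * c)) u = y := by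
  have hdx : d x = x := (hcd x).resolve_left (mem_support.mp hx)
  rw [mul_apply, mul_apply, hu, hdx, swap_apply_left]

theorem IsCycle.sameCycle_swap_mul_mul (hc : c.IsCycle) (hcd : c.Disjoint d)
    (hx : x ∈ c.support) (hy : y ∈ d.support) {w : α} (hw : w ∈ c.support) :
    (swap x y * (d * c)).SameCycle w y := by
  obtain ⟨u, hux⟩ := c.surjective x
  have hu : u ∈ c.support := apply_mem_support.mp (hux ▸ hx)
  have hwu : (swap x y * (d * c)).SameCycle w u := by
    refine SameCycle.of_apply_eq_of_ne (fun z hz hzu => ?_)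
      (hc.sameCycle (mem_support.mp hw) (mem_support.mp hu))
    exact hcd.swap_mul_mul_apply hy (hz.mem_support_iff.mpr hu) fun hzx =>
      hzu (c.injective (hzx.trans hux.symm))
  have hwgu := sameCycle_apply_right.mpr hwu
  rwa [hcd.swap_mul_mul_apply_of_apply_eq hx hux] at hwgu

theorem IsCycle.swap_mul_mul_of_disjoint (hc : c.IsCycle) (hd : d.IsCycle) (hcd : c.Disjoint d)
    (hx : x ∈ c.support) (hy : y ∈ d.support) :
    (swap x y * (d * c)).IsCycle ∧
      (swap x y * (d * c)).support = c.support ∪ d.support := by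
  set g := swap x y * (d * c)
  have hg_symm : g = swap y x * (c * d) := by rw [swap_comm, hcd.commute.eq]
  have hxy : g.SameCycle x y := hc.sameCycle_swap_mul_mul hcd hx hy hx
  have hsame : ∀ w ∈ c.support ∪ d.support, g.SameCycle x w := by
    intro w hw
    rcases Finset.mem_union.mp hw with hw | hw
    · exact (hc.sameCycle_swap_mul_mul hcd hx hy hw).trans hxy.symm |>.symm
    · rw [hg_symm] at hxy ⊢
      exact (hd.sameCycle_swap_mul_mul hcd.symm hy hx hw).symm
  have hgx : g x ≠ x := by
    rw [hcd.swap_mul_mul_apply hy hx (mem_support.mp hx)]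
    exact mem_support.mp hx
  have hsupp_le : g.support ⊆ c.support ∪ d.support := by
    refine (support_mul_le _ _).trans (Finset.union_subset ?_ ?_)
    · have hxy : x ≠ y := fun h =>
        (disjoint_iff_disjoint_support.mp hcd).notMem_of_mem_left_finset hx (h ▸ hy)
      rw [support_swap hxy]
      exact Finset.insert_subset (Finset.mem_union_left _ hx)
        (Finset.singleton_subset_iff.mpr (Finset.mem_union_right _ hy))
    · rw [hcd.symm.support_mul, Finset.union_comm]
  refine ⟨⟨x, hgx, fun w hw => hsame w (hsupp_le (mem_support.mpr hw))⟩, ?_⟩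
  refine Finset.Subset.antisymm hsupp_le fun w hw => ?_
  exact (hsame w hw).mem_support_iff.mp (mem_support.mpr hgx)

theorem isCycle_swap_mul_mul_of_mem_cycleFactorsFinset {σ : Perm α}
    (hc : c ∈ σ.cycleFactorsFinset) (hd : d ∈ σ.cycleFactorsFinset) (hcd : c ≠ d)
    (hx : x ∈ c.support) (hy : y ∈ d.support) :
    (swap x y * (d * c)).IsCycle ∧
      (swap x y * (d * c)).support = c.support ∪ d.support :=
  (mem_cycleFactorsFinset_iff.mp hc).1.swap_mul_mul_of_disjoint (mem_cycleFactorsFinset_iff.mp hd).1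
    (σ.cycleFactorsFinset_pairwise_disjoint hc hd hcd) hx hy

theorem cycleFactorsFinset_swap_mul {σ : Perm α} (hc : c ∈ σ.cycleFactorsFinset)
    (hd : d ∈ σ.cycleFactorsFinset) (hcd : c ≠ d) (hx : x ∈ c.support) (hy : y ∈ d.support) :
    (swap x y * σ).cycleFactorsFinset =
      insert (swap x y * (d * c)) (σ.cycleFactorsFinset \ {c, d}) := by
  have hcd' : c.Disjoint d := σ.cycleFactorsFinset_pairwise_disjoint hc hd hcd
  have hd' : d ∈ (σ * c⁻¹).cycleFactorsFinset := by
    rw [cycleFactorsFinset_mul_inv_mem_eq_sdiff hc]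
    exact Finset.mem_sdiff.mpr ⟨hd, Finset.notMem_singleton.mpr hcd.symm⟩
  set ρ := σ * c⁻¹ * d⁻¹
  have hρ : ρ.cycleFactorsFinset = σ.cycleFactorsFinset \ {c, d} := by
    rw [cycleFactorsFinset_mul_inv_mem_eq_sdiff hd', cycleFactorsFinset_mul_inv_mem_eq_sdiff hc,
      sdiff_sdiff_left, Finset.sup_eq_union, ← Finset.insert_eq]
  have hρc : ρ.Disjoint c :=
    (disjoint_mul_inv_of_mem_cycleFactorsFinset hc).mul_left hcd'.symm.inv_left
  have hρd : ρ.Disjoint d := disjoint_mul_inv_of_mem_cycleFactorsFinset hd'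
  obtain ⟨hg, hg_supp⟩ := isCycle_swap_mul_mul_of_mem_cycleFactorsFinset hc hd hcd hx hy
  have hρg : ρ.Disjoint (swap x y * (d * c)) :=
    (hρd.mul_right hρc).mono le_rfl (by rw [hg_supp, hcd'.symm.support_mul, Finset.union_comm])
  have hσ : swap x y * σ = ρ * (swap x y * (d * c)) := by
    calc swap x y * σ = swap x y * ρ * (d * c) := by simp only [ρ]; group
      _ = ρ * swap x y * (d * c) := by
        rw [mul_swap_eq_swap_mul, (hρc x).resolve_right (mem_support.mp hx),
          (hρd y).resolve_right (mem_support.mp hy)]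
      _ = ρ * (swap x y * (d * c)) := mul_assoc _ _ _
  rw [hσ, hρg.cycleFactorsFinset_mul_eq_union, hρ, hg.cycleFactorsFinset_eq_singleton,
    Finset.union_comm, ← Finset.insert_eq]

end Equiv.Perm

theorem three_cycle_joins_three_cycle_factors_general
    (d : ℕ) (σ : Perm (Fin d))
    (c₁ c₂ c₃ : Perm (Fin d))
    (h₁ : c₁ ∈ σ.cycleFactorsFinset) (h₂ : c₂ ∈ σ.cycleFactorsFinset)
    (h₃ : c₃ ∈ σ.cycleFactorsFinset)
    (h12 : c₁ ≠ c₂) (h13 : c₁ ≠ c₃) (h23 : c₂ ≠ c₃)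
    (a b c : Fin d)
    (ha : a ∈ c₁.support) (hb : b ∈ c₂.support) (hc : c ∈ c₃.support)
    (τ : Perm (Fin d)) (hτ : τ = Equiv.swap a c * Equiv.swap a b) :
    ∃ f : Perm (Fin d), f.IsCycle ∧
      f.support = c₁.support ∪ c₂.support ∪ c₃.support ∧
      (τ * σ).cycleFactorsFinset = insert f (σ.cycleFactorsFinset \ {c₁, c₂, c₃}) := by
  set g := swap a b * (c₂ * c₁)
  have hσ₁ := cycleFactorsFinset_swap_mul h₁ h₂ h12 ha hb
  have hg : g ∈ (swap a b * σ).cycleFactorsFinset := hσ₁ ▸ Finset.mem_insert_self _ _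
  have h₃' : c₃ ∈ (swap a b * σ).cycleFactorsFinset := by
    rw [hσ₁]; simp [h₃, h13.symm, h23.symm]
  have hg_supp := (isCycle_swap_mul_mul_of_mem_cycleFactorsFinset h₁ h₂ h12 ha hb).2
  have ha' : a ∈ g.support := hg_supp ▸ Finset.mem_union_left _ ha
  have hg₃ : g ≠ c₃ := fun h => (disjoint_iff_disjoint_support.mp
    (σ.cycleFactorsFinset_pairwise_disjoint h₁ h₃ h13)).notMem_of_mem_left_finset ha (h ▸ ha')
  have hg_new : g ∉ σ.cycleFactorsFinset \ {c₁, c₂} := fun hmem => by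
    have hgc₁ : g = c₁ := (cycle_is_cycleOf ha' (Finset.mem_sdiff.mp hmem).1).trans
      (cycle_is_cycleOf ha h₁).symm
    simp [hgc₁] at hmem
  obtain ⟨hf, hf_supp⟩ := isCycle_swap_mul_mul_of_mem_cycleFactorsFinset hg h₃' hg₃ ha' hc
  refine ⟨_, hf, by rw [hf_supp, hg_supp], ?_⟩
  rw [hτ, mul_assoc, cycleFactorsFinset_swap_mul hg h₃' hg₃ ha' hc, hσ₁,
    Finset.insert_sdiff_of_mem _ (Finset.mem_insert_self _ _)]
  ext e
  simp only [Finset.mem_sdiff, Finset.mem_insert, Finset.mem_singleton]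
  grind

/-- if the three entries of the 3-cycle `τ = (a b c) = swap a c * swap a b`
lie in three distinct cycle factors `c₁, c₂, c₃` of `σ`, then the disjoint cycle
decomposition of `τ∘σ` consists of the cycle factors of `σ` other than `c₁, c₂, c₃`
together with a single cycle whose support is the union of the three supports. -/
theorem three_cycle_joins_three_cycle_factors
    (d : ℕ) (hd : 1 ≤ d) (σ : Perm (Fin d))
    (c₁ c₂ c₃ : Perm (Fin d))
    (h₁ : c₁ ∈ σ.cycleFactorsFinset) (h₂ : c₂ ∈ σ.cycleFactorsFinset)
    (h₃ : c₃ ∈ σ.cycleFactorsFinset)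
    (h12 : c₁ ≠ c₂) (h13 : c₁ ≠ c₃) (h23 : c₂ ≠ c₃)
    (a b c : Fin d) (hab : a ≠ b) (hac : a ≠ c) (hbc : b ≠ c)
    (ha : a ∈ c₁.support) (hb : b ∈ c₂.support) (hc : c ∈ c₃.support)
    (τ : Perm (Fin d)) (hτ : τ = Equiv.swap a c * Equiv.swap a b) :
    ∃ f : Perm (Fin d), f.IsCycle ∧
      f.support = c₁.support ∪ c₂.support ∪ c₃.support ∧
      (τ * σ).cycleFactorsFinset = insert f (σ.cycleFactorsFinset \ {c₁, c₂, c₃}) :=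
  three_cycle_joins_three_cycle_factors_general d σ c₁ c₂ c₃ h₁ h₂ h₃ h12 h13 h23 a b c ha hb hc τ
    hτ
end

section
/- Let k ≥ 2 be an integer, let A be a nonnegative integer, and let x₁ < x₂ < ⋯ < x_k and y₁ < y₂ < ⋯ < y_k be strictly increasing sequences of positive integers satisfying y₁ + ⋯ + y_k ≤ A + x₁ + ⋯ + x_k. Then for every integer i with 1 ≤ i ≤ k−1, one has y₁ + ⋯ + y_i < A + x_{k−i+1} + ⋯ + x_k. -/
lemma gap_aux {k : ℕ} {f : ℕ → ℕ} (hf : ∀ i j, i < j → j < k → f i < f j) :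
    ∀ a b, a ≤ b → b < k → f a + (b - a) ≤ f b := by
  intro a b
  induction b with
  | zero => intro hab _; interval_cases a; simp
  | succ n ih =>
    intro hab hbk
    rcases eq_or_lt_of_le hab with h | h
    · subst h; simp
    · have h1 := ih (by omega) (by omega)
      have h2 := hf n (n + 1) (by omega) hbk
      omega

/-- if `x₁ < ⋯ < x_k` and `y₁ < ⋯ < y_k` are strictly increasing sequences
of positive integers (here 0-indexed, so `x j` is `x_{j+1}`) with
`y₁ + ⋯ + y_k ≤ A + x₁ + ⋯ + x_k`, then for every `1 ≤ i ≤ k−1` one has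
`y₁ + ⋯ + y_i < A + x_{k−i+1} + ⋯ + x_k`. -/
theorem partial_sums_inequality
    (k A : ℕ) (hk : 2 ≤ k) (x y : ℕ → ℕ)
    (hxpos : ∀ i < k, 0 < x i) (hypos : ∀ i < k, 0 < y i)
    (hxmono : ∀ i j, i < j → j < k → x i < x j)
    (hymono : ∀ i j, i < j → j < k → y i < y j)
    (hsum : ∑ j ∈ Finset.range k, y j ≤ A + ∑ j ∈ Finset.range k, x j) :
    ∀ i, 1 ≤ i → i ≤ k - 1 →
      ∑ j ∈ Finset.range i, y j < A + ∑ j ∈ Finset.Ico (k - i) k, x j := by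
  intro i hi1 hik
  by_contra hcon
  push_neg at hcon
  have hik' : i ≤ k - 1 := hik
  have hgx := gap_aux hxmono
  have hgy := gap_aux hymono
  -- split sums
  have hsplitx : ∑ j ∈ Finset.range (k - i), x j + ∑ j ∈ Finset.Ico (k - i) k, x j
      = ∑ j ∈ Finset.range k, x j := by
    simp only [Finset.range_eq_Ico]
    exact Finset.sum_Ico_consecutive _ (by omega) (by omega)
  have hsplity : ∑ j ∈ Finset.range i, y j + ∑ j ∈ Finset.Ico i k, y j
      = ∑ j ∈ Finset.range k, y j := by
    simp only [Finset.range_eq_Ico]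
    exact Finset.sum_Ico_consecutive _ (by omega) (by omega)
  -- hence top y sum ≤ bottom x sum
  have hTP : ∑ j ∈ Finset.Ico i k, y j ≤ ∑ j ∈ Finset.range (k - i), x j := by omega
  -- rewrite Q as a range sum
  have hQ : ∑ j ∈ Finset.Ico (k - i) k, x j
      = ∑ t ∈ Finset.range i, x (k - i + t) := by
    rw [Finset.sum_Ico_eq_sum_range, show k - (k - i) = i from by omega]
  -- there is t < i with x (k-i+t) ≤ y t
  have hex : ∃ t < i, x (k - i + t) ≤ y t := by
    by_contra h
    push_neg at h
    have : ∑ t ∈ Finset.range i, y t < ∑ t ∈ Finset.range i, x (k - i + t) :=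
      Finset.sum_lt_sum_of_nonempty (by simp; omega) (fun t ht => h t (Finset.mem_range.mp ht))
    omega
  obtain ⟨t, hti, hty⟩ := hex
  -- but then the top y's beat the bottom x's
  have hT : ∑ j ∈ Finset.Ico i k, y j = ∑ s ∈ Finset.range (k - i), y (i + s) := by
    rw [Finset.sum_Ico_eq_sum_range]
  have hlt : ∑ s ∈ Finset.range (k - i), x s < ∑ s ∈ Finset.range (k - i), y (i + s) := by
    apply Finset.sum_lt_sum_of_nonempty (by simp; omega)
    intro s hs
    have hs' : s < k - i := Finset.mem_range.mp hs
    have hy1 : y t + (i + s - t) ≤ y (i + s) := hgy t (i + s) (by omega) (by omega)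
    have hx1 : x s + (k - i + t - s) ≤ x (k - i + t) := hgx s (k - i + t) (by omega) (by omega)
    omega
  omega
end
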